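/- arXiv:1502.01068 — 10 statements merged into one kernel-verified Lean document; each statement's English description precedes it below -/
import Mathlib

section
/- If f : ℝⁿ → ℝ is M_f-self-concordant-like and A : ℝᵐ → ℝⁿ is a linear map with operator norm ‖A‖₂, and b ∈ ℝⁿ, then the function h(x) := f(Ax + b) is (M_f · ‖A‖₂)-self-concordant-like. -/
open scoped RealInnerProductSpace

/-- A convex `C³` function `f` is `M`-self-concordant-like if along every line
`t ↦ f (x + t • u)` the third derivative is bounded by `M * φ''(t) * ‖u‖`. -/
def SCLike {E : Type*} [NormedAddCommGroup E] [InnerProductSpace ℝ E]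
    (M : ℝ) (f : E → ℝ) : Prop :=
  ContDiff ℝ 3 f ∧ ConvexOn ℝ Set.univ f ∧
    ∀ x u : E, ∀ t : ℝ,
      |deriv^[3] (fun s : ℝ => f (x + s • u)) t| ≤
        M * deriv^[2] (fun s : ℝ => f (x + s • u)) t * ‖u‖

/-!
Restricted to a line `s ↦ x + s • u`, the function `f (A · + b)` is the restriction of `f` to the
line `s ↦ (A x + b) + s • A u`, so the self-concordance-like bound for `f` along that line holds
with `‖A u‖ ≤ ‖A‖ * ‖u‖` in place of `‖u‖`. The bound forces `M * φ'' ≥ 0` whenever `A u ≠ 0`,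
and for `A u = 0` the restriction is constant.
-/

namespace SCLike

variable {E F : Type*} [NormedAddCommGroup E] [InnerProductSpace ℝ E]
  [NormedAddCommGroup F] [InnerProductSpace ℝ F] {M : ℝ} {f : E → ℝ}

theorem abs_deriv3_le_of_norm_le (hf : SCLike M f) (x u : E) (t : ℝ) {c : ℝ}
    (hc : ‖u‖ ≤ c) :
    |deriv^[3] (fun s : ℝ => f (x + s • u)) t| ≤
      M * deriv^[2] (fun s : ℝ => f (x + s • u)) t * c := by
  rcases eq_or_ne u 0 with rfl | hu
  · simp
  have hbound := hf.2.2 x u t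
  have hM_deriv2 : 0 ≤ M * deriv^[2] (fun s : ℝ => f (x + s • u)) t :=
    nonneg_of_mul_nonneg_left ((abs_nonneg _).trans hbound) (norm_pos_iff.mpr hu)
  exact hbound.trans (mul_le_mul_of_nonneg_left hc hM_deriv2)

theorem comp_add_const (hf : SCLike M f) (b : E) : SCLike M (fun y => f (y + b)) := by
  obtain ⟨hsmooth, hconv, hbound⟩ := hf
  refine ⟨hsmooth.comp (contDiff_id.add contDiff_const), ?_, fun x u t => ?_⟩
  · simpa only [Set.preimage_univ, Function.comp_def] using hconv.translate_left b
  · simpa only [add_right_comm] using hbound (x + b) u t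

theorem comp_continuousLinearMap (hf : SCLike M f) (A : F →L[ℝ] E) :
    SCLike (M * ‖A‖) (fun x => f (A x)) := by
  refine ⟨hf.1.comp A.contDiff, ?_, fun x u t => ?_⟩
  · simpa only [Set.preimage_univ, Function.comp_def, ContinuousLinearMap.coe_coe] using
      hf.2.1.comp_linearMap A.toLinearMap
  · have hline : (fun s : ℝ => f (A (x + s • u))) = fun s => f (A x + s • A u) := by
      simp only [map_add, map_smul]
    rw [hline, mul_right_comm M, mul_assoc _ ‖A‖]
    exact hf.abs_deriv3_le_of_norm_le (A x) (A u) t (A.le_opNorm u)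

end SCLike

theorem sclike_comp_affine_general {E F : Type*}
    [NormedAddCommGroup E] [InnerProductSpace ℝ E]
    [NormedAddCommGroup F] [InnerProductSpace ℝ F]
    (M : ℝ) (f : E → ℝ) (hf : SCLike M f)
    (A : F →L[ℝ] E) (b : E) :
    SCLike (M * ‖A‖) (fun x : F => f (A x + b)) :=
  (hf.comp_add_const b).comp_continuousLinearMap A

/-- Pre-composition with an affine map `x ↦ A x + b` turns an `M_f`-self-concordant-like
function into an `M_f * ‖A‖`-self-concordant-like one. -/
theorem sclike_comp_affine {E F : Type*}
    [NormedAddCommGroup E] [InnerProductSpace ℝ E]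
    [NormedAddCommGroup F] [InnerProductSpace ℝ F]
    (M : ℝ) (hM : 0 < M) (f : E → ℝ) (hf : SCLike M f)
    (A : F →L[ℝ] E) (b : E) :
    SCLike (M * ‖A‖) (fun x : F => f (A x + b)) :=
  sclike_comp_affine_general M f hf A b
end

section
/- Let f : ℝⁿ → ℝ be M_f-self-concordant-like. For any x, y in the domain of f, with r := M_f‖y − x‖₂, the inequality e^{−r/2}·‖y − x‖_x ≤ ‖y − x‖_y ≤ e^{r/2}·‖y − x‖_x holds, where ‖u‖_z := ⟨∇²f(z)u, u⟩^{1/2}. -/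
open scoped RealInnerProductSpace

/-- The Hessian quadratic form `⟨∇²f(x) u, u⟩` of `f` at `x`. -/
noncomputable def hessQ {E : Type*} [NormedAddCommGroup E] [InnerProductSpace ℝ E]
    (f : E → ℝ) (x u : E) : ℝ :=
  iteratedFDeriv ℝ 2 f x ![u, u]

/-- The local norm `‖u‖_x := ⟨∇²f(x) u, u⟩^{1/2}`. -/
noncomputable def locNorm {E : Type*} [NormedAddCommGroup E] [InnerProductSpace ℝ E]
    (f : E → ℝ) (x u : E) : ℝ :=
  Real.sqrt (hessQ f x u)

/-!
Along the segment `φ t = f (x + t • (y - x))`, the second derivative `g = φ''` is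
`‖y - x‖²` measured in the local norm at `x + t • (y - x)`; it is nonnegative by convexity,
and self-concordance-likeness reads `|g'| ≤ r g` with `r = M ‖y - x‖`. Grönwall's inequality,
run forwards and backwards in time on `[0, 1]`, gives `e^{-r} g 0 ≤ g 1 ≤ e^{r} g 0`; this is
the integrated form of `|(log g)'| ≤ r`, but needs no positivity of `g`. Take square roots.
-/

open Set Real

theorem hasDerivAt_iterate_deriv {𝕜 F : Type*} [NontriviallyNormedField 𝕜]
    [NormedAddCommGroup F] [NormedSpace 𝕜 F] {f : 𝕜 → F} {k : ℕ}
    (hf : ContDiff 𝕜 (k + 1) f) (t : 𝕜) :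
    HasDerivAt (deriv^[k] f) (deriv^[k + 1] f t) t := by
  rw [Function.iterate_succ_apply']
  exact ((ContDiff.iterate_deriv' 1 k (by push_cast; rwa [add_comm])).differentiable
    one_ne_zero t).hasDerivAt

section Gronwall

variable {E : Type*} [NormedAddCommGroup E] [NormedSpace ℝ E] {f f' : ℝ → E} {K a b : ℝ}

theorem norm_le_norm_left_mul_exp_of_norm_deriv_le (hab : a ≤ b)
    (hf : ∀ t ∈ Icc a b, HasDerivAt f (f' t) t) (bound : ∀ t ∈ Icc a b, ‖f' t‖ ≤ K * ‖f t‖) :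
    ‖f b‖ ≤ ‖f a‖ * exp (K * (b - a)) := by
  have := norm_le_gronwallBound_of_norm_deriv_right_le (ε := 0) (δ := ‖f a‖)
    (fun t ht => (hf t ht).continuousAt.continuousWithinAt)
    (fun t ht => (hf t (Ico_subset_Icc_self ht)).hasDerivWithinAt) le_rfl
    (fun t ht => by simpa using bound t (Ico_subset_Icc_self ht)) b (right_mem_Icc.2 hab)
  rwa [gronwallBound_ε0] at this

theorem norm_le_norm_right_mul_exp_of_norm_deriv_le (hab : a ≤ b)
    (hf : ∀ t ∈ Icc a b, HasDerivAt f (f' t) t) (bound : ∀ t ∈ Icc a b, ‖f' t‖ ≤ K * ‖f t‖) :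
    ‖f a‖ ≤ ‖f b‖ * exp (K * (b - a)) := by
  have hreflect : ∀ t ∈ Icc a b, a + b - t ∈ Icc a b :=
    fun t ⟨hat, htb⟩ => ⟨by linarith, by linarith⟩
  have := norm_le_norm_left_mul_exp_of_norm_deriv_le (f := fun t => f (a + b - t))
    (f' := fun t => -f' (a + b - t)) (K := K) hab
    (fun t ht => by
      simpa [Function.comp_def] using
        (hf _ (hreflect t ht)).scomp t ((hasDerivAt_id t).const_sub (a + b)))
    (fun t ht => by simpa using bound _ (hreflect t ht))
  simpa using this

end Gronwall

section Line

variable {E : Type*} [NormedAddCommGroup E] [InnerProductSpace ℝ E] {f : E → ℝ}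

theorem deriv2_comp_line_nonneg (hconv : ConvexOn ℝ univ f) (hf : Differentiable ℝ f)
    (x u : E) (t : ℝ) : 0 ≤ deriv^[2] (fun s : ℝ => f (x + s • u)) t := by
  have hline : ConvexOn ℝ univ (fun s : ℝ => f (x + s • u)) := by
    simpa [Function.comp_def, AffineMap.lineMap_apply, add_comm]
      using hconv.comp_affineMap (AffineMap.lineMap x (x + u))
  have hdiff : Differentiable ℝ (fun s : ℝ => f (x + s • u)) := by fun_prop
  exact Monotone.deriv_nonneg
    (monotoneOn_univ.1 (hline.monotoneOn_deriv fun s _ => hdiff s))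

theorem deriv2_comp_line_eq_hessQ (hf : ContDiff ℝ 2 f) (x u : E) (t : ℝ) :
    deriv^[2] (fun s : ℝ => f (x + s • u)) t = hessQ f (x + t • u) u := by
  have hline (s : ℝ) : HasDerivAt (fun s : ℝ => x + s • u) u s := by
    simpa using ((hasDerivAt_id s).smul_const u).const_add x
  have hfirst : deriv (fun s : ℝ => f (x + s • u)) = fun s => fderiv ℝ f (x + s • u) u :=
    funext fun s =>
      ((hf.differentiable two_ne_zero _).hasFDerivAt.comp_hasDerivAt s (hline s)).deriv
  have hsecond : HasDerivAt (fun s => fderiv ℝ f (x + s • u) u)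
      (fderiv ℝ (fderiv ℝ f) (x + t • u) u u) t :=
    (((hf.fderiv_right le_rfl).differentiable one_ne_zero _).hasFDerivAt.comp_hasDerivAt t
      (hline t)).clm_apply (hasDerivAt_const t u) |>.congr_deriv (by simp)
  rw [Function.iterate_succ_apply', Function.iterate_one, hfirst, hsecond.deriv, hessQ,
    iteratedFDeriv_two_apply]
  rfl

end Line

theorem sqrt_le_exp_half_mul_sqrt {a b r : ℝ} (ha : 0 ≤ a) (h : b ≤ a * exp r) :
    √b ≤ exp (r / 2) * √a := by
  calc √b ≤ √(a * exp r) := sqrt_le_sqrt h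
    _ = exp (r / 2) * √a := by rw [sqrt_mul ha, exp_half, mul_comm]

theorem sclike_local_norm_bound_general {E : Type*} [NormedAddCommGroup E] [InnerProductSpace ℝ E]
    (M : ℝ) (f : E → ℝ) (hf : SCLike M f) (x y : E) :
    Real.exp (-(M * ‖y - x‖) / 2) * locNorm f x (y - x) ≤ locNorm f y (y - x) ∧
      locNorm f y (y - x) ≤ Real.exp (M * ‖y - x‖ / 2) * locNorm f x (y - x) := by
  obtain ⟨hf3, hconv, hineq⟩ := hf
  set φ : ℝ → ℝ := fun s => f (x + s • (y - x))
  have hφ : ContDiff ℝ 3 φ := hf3.comp (by fun_prop)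
  have hnonneg (t : ℝ) : 0 ≤ deriv^[2] φ t :=
    deriv2_comp_line_nonneg hconv (hf3.differentiable (by norm_num)) x (y - x) t
  have hderiv (t : ℝ) (_ : t ∈ Icc (0 : ℝ) 1) : HasDerivAt (deriv^[2] φ) (deriv^[3] φ t) t :=
    hasDerivAt_iterate_deriv hφ t
  have hbound (t : ℝ) (_ : t ∈ Icc (0 : ℝ) 1) :
      ‖deriv^[3] φ t‖ ≤ M * ‖y - x‖ * ‖deriv^[2] φ t‖ := by
    rw [norm_of_nonneg (hnonneg t), mul_right_comm]
    exact hineq x (y - x) t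
  have hx : hessQ f x (y - x) = deriv^[2] φ 0 := by
    simp [φ, deriv2_comp_line_eq_hessQ (hf3.of_le (by norm_num))]
  have hy : hessQ f y (y - x) = deriv^[2] φ 1 := by
    simp [φ, deriv2_comp_line_eq_hessQ (hf3.of_le (by norm_num))]
  have hfwd := norm_le_norm_left_mul_exp_of_norm_deriv_le zero_le_one hderiv hbound
  have hbwd := norm_le_norm_right_mul_exp_of_norm_deriv_le zero_le_one hderiv hbound
  simp only [norm_of_nonneg (hnonneg _), sub_zero, mul_one] at hfwd hbwd
  rw [locNorm, locNorm, hx, hy]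
  refine ⟨?_, sqrt_le_exp_half_mul_sqrt (hnonneg 0) hfwd⟩
  rw [neg_div, ← le_div_iff₀' (exp_pos _), div_eq_mul_inv, ← exp_neg, neg_neg]
  exact (sqrt_le_exp_half_mul_sqrt (hnonneg 1) hbwd).trans_eq (mul_comm _ _)

/-- Bounds on the local norm: `e^{-r/2) ‖y-x‖_x ≤ ‖y-x‖_y ≤ e^{r/2} ‖y-x‖_x`
with `r = M_f ‖y-x‖₂`. -/
theorem sclike_local_norm_bound {E : Type*} [NormedAddCommGroup E] [InnerProductSpace ℝ E]
    (M : ℝ) (hM : 0 < M) (f : E → ℝ) (hf : SCLike M f) (x y : E) :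
    Real.exp (-(M * ‖y - x‖) / 2) * locNorm f x (y - x) ≤ locNorm f y (y - x) ∧
      locNorm f y (y - x) ≤ Real.exp (M * ‖y - x‖ / 2) * locNorm f x (y - x) :=
  sclike_local_norm_bound_general M f hf x y
end

section
/- Let f : ℝⁿ → ℝ be M_f-self-concordant-like. For any x, y in its domain, with r := M_f‖y − x‖₂ and λ := ‖y − x‖_x, we have ((1 − e^{−r})/r)·λ² ≤ ⟨∇f(y) − ∇f(x), y − x⟩ ≤ ((e^{r} − 1)/r)·λ². -/
/-! Along the segment, `φ s = f (x + s • (y - x))` satisfies `|φ'''| ≤ r φ''` with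
`r = M ‖y - x‖`, so by Grönwall `e^{-rs} φ''(0) ≤ φ''(s) ≤ e^{rs} φ''(0)` for `s ≥ 0`.
Integrating over `[0, 1]` bounds `φ'(1) - φ'(0) = ⟪∇f y - ∇f x, y - x⟫` between
`(1 - e^{-r}) / r · φ''(0)` and `(e^r - 1) / r · φ''(0)`, and `φ''(0) = ‖y - x‖_x²`. -/

open scoped RealInnerProductSpace

open Real

section Gronwall

variable {g : ℝ → ℝ} {K : ℝ}

theorem le_exp_mul_mul_of_deriv_le (hg : Differentiable ℝ g) (h : ∀ t, deriv g t ≤ K * g t)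
    {t : ℝ} (ht : 0 ≤ t) : g t ≤ exp (K * t) * g 0 := by
  have hdecay : Antitone fun s => exp (-(K * s)) * g s := by
    refine antitone_of_deriv_nonpos (by fun_prop) fun s => ?_
    have hd : HasDerivAt (fun s => exp (-(K * s)) * g s)
        (exp (-(K * s)) * -(K * 1) * g s + exp (-(K * s)) * deriv g s) s :=
      ((hasDerivAt_id s).const_mul K).neg.exp.mul (hg s).hasDerivAt
    rw [hd.deriv]
    nlinarith [exp_pos (-(K * s)), h s]
  have := mul_le_mul_of_nonneg_left (hdecay ht) (exp_pos (K * t)).le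
  simpa [← mul_assoc, ← exp_add] using this

theorem exp_mul_mul_le_of_mul_le_deriv (hg : Differentiable ℝ g)
    (h : ∀ t, K * g t ≤ deriv g t) {t : ℝ} (ht : 0 ≤ t) : exp (K * t) * g 0 ≤ g t := by
  have := le_exp_mul_mul_of_deriv_le (g := -g) (K := K) hg.neg
    (fun s => by simpa [deriv.neg'] using h s) ht
  simpa using this

end Gronwall

theorem integral_exp_mul_zero_one {K : ℝ} (hK : K ≠ 0) :
    ∫ t in (0 : ℝ)..1, exp (K * t) = (exp K - 1) / K := by
  rw [intervalIntegral.integral_comp_mul_left exp hK, integral_exp, mul_one, mul_zero, exp_zero,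
    div_eq_inv_mul, smul_eq_mul]

theorem deriv_sub_deriv_mem_Icc_of_abs_iterate_deriv_three_le {φ : ℝ → ℝ} {K : ℝ}
    (hφ : ContDiff ℝ 3 φ) (hK : K ≠ 0) (h : ∀ t, |deriv^[3] φ t| ≤ K * deriv^[2] φ t) :
    deriv φ 1 - deriv φ 0 ∈ Set.Icc ((1 - exp (-K)) / K * deriv^[2] φ 0)
      ((exp K - 1) / K * deriv^[2] φ 0) := by
  set g := deriv^[2] φ
  have hg : ContDiff ℝ 1 g := hφ.iterate_deriv' 1 2
  have hg' : Differentiable ℝ g := hg.differentiable one_ne_zero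
  have hupper : ∀ t, deriv g t ≤ K * g t := fun t => (abs_le.mp (h t)).2
  have hlower : ∀ t, -K * g t ≤ deriv g t := fun t =>
    (neg_mul K (g t)).trans_le (abs_le.mp (h t)).1
  have hFTC : ∫ t in (0 : ℝ)..1, g t = deriv φ 1 - deriv φ 0 :=
    intervalIntegral.integral_deriv_eq_sub
      (fun t _ => ((hφ.iterate_deriv' 2 1).differentiable two_ne_zero).differentiableAt)
      (hg.continuous.intervalIntegrable 0 1)
  rw [← hFTC]
  constructor
  · rw [show (1 - exp (-K)) / K = (exp (-K) - 1) / -K by field_simp; ring,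
      ← integral_exp_mul_zero_one (neg_ne_zero.mpr hK), ← intervalIntegral.integral_mul_const]
    exact intervalIntegral.integral_mono_on zero_le_one
      (Continuous.intervalIntegrable (by fun_prop) 0 1) (hg.continuous.intervalIntegrable 0 1)
      fun t ht => exp_mul_mul_le_of_mul_le_deriv hg' hlower ht.1
  · rw [← integral_exp_mul_zero_one hK, ← intervalIntegral.integral_mul_const]
    exact intervalIntegral.integral_mono_on zero_le_one (hg.continuous.intervalIntegrable 0 1)
      (Continuous.intervalIntegrable (by fun_prop) 0 1)
      fun t ht => le_exp_mul_mul_of_deriv_le hg' hupper ht.1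

section Line

variable {E F : Type*} [NormedAddCommGroup E] [NormedSpace ℝ E] [NormedAddCommGroup F]
  [NormedSpace ℝ F] {f : E → F}

theorem hasDerivAt_comp_line (hf : Differentiable ℝ f) (x u : E) (s : ℝ) :
    HasDerivAt (fun s : ℝ => f (x + s • u)) (fderiv ℝ f (x + s • u) u) s := by
  have hline : HasDerivAt (fun s : ℝ => x + s • u) u s := by
    simpa using ((hasDerivAt_id s).smul_const u).const_add x
  exact (hf _).hasFDerivAt.comp_hasDerivAt s hline

theorem deriv_comp_line (hf : Differentiable ℝ f) (x u : E) :
    deriv (fun s : ℝ => f (x + s • u)) = fun s => fderiv ℝ f (x + s • u) u :=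
  funext fun s => (hasDerivAt_comp_line hf x u s).deriv

theorem iterate_deriv_two_comp_line (hf : ContDiff ℝ 2 f) (x u : E) (s : ℝ) :
    deriv^[2] (fun s : ℝ => f (x + s • u)) s =
      iteratedFDeriv ℝ 2 f (x + s • u) ![u, u] := by
  have hdf : Differentiable ℝ (fderiv ℝ f) :=
    (hf.fderiv_right (m := 1) le_rfl).differentiable one_ne_zero
  rw [iteratedFDeriv_two_apply, Function.iterate_succ_apply', Function.iterate_one,
    deriv_comp_line (hf.differentiable two_ne_zero)]
  exact ((ContinuousLinearMap.apply ℝ F u).hasFDerivAt.comp_hasDerivAt s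
    (hasDerivAt_comp_line hdf x u s)).deriv

end Line

/-- Bounds on the gradient:
`((1 - e^{-r})/r) λ² ≤ ⟨∇f(y) - ∇f(x), y - x⟩ ≤ ((e^r - 1)/r) λ²`
with `r = M_f ‖y - x‖₂` and `λ² = ⟨∇²f(x)(y-x), y-x⟩`. -/
theorem sclike_gradient_bound {E : Type*} [NormedAddCommGroup E] [InnerProductSpace ℝ E]
    [CompleteSpace E]
    (M : ℝ) (hM : 0 < M) (f : E → ℝ) (hf : SCLike M f) (x y : E) :
    ((1 - Real.exp (-(M * ‖y - x‖))) / (M * ‖y - x‖)) * hessQ f x (y - x) ≤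
        ⟪gradient f y - gradient f x, y - x⟫ ∧
      ⟪gradient f y - gradient f x, y - x⟫ ≤
        ((Real.exp (M * ‖y - x‖) - 1) / (M * ‖y - x‖)) * hessQ f x (y - x) := by
  obtain ⟨hf3, -, hsc⟩ := hf
  rcases eq_or_ne y x with rfl | hxy
  · simp
  set u := y - x
  set φ := fun s : ℝ => f (x + s • u)
  have hK : M * ‖u‖ ≠ 0 := mul_ne_zero hM.ne' (norm_ne_zero_iff.mpr (sub_ne_zero.mpr hxy))
  have hφ : ContDiff ℝ 3 φ := hf3.comp (by fun_prop)
  have key := deriv_sub_deriv_mem_Icc_of_abs_iterate_deriv_three_le hφ hK fun t => by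
    simpa only [mul_right_comm] using hsc x u t
  have hgrad : deriv φ 1 - deriv φ 0 = ⟪gradient f y - gradient f x, u⟫ := by
    simp [φ, u, deriv_comp_line (hf3.differentiable (by norm_num)), inner_sub_left,
      inner_gradient_left]
  have hhess : deriv^[2] φ 0 = hessQ f x u := by
    simp [φ, iterate_deriv_two_comp_line (hf3.of_le (by norm_num)), hessQ]
  rwa [hgrad, hhess] at key
end

section
/- Let f : ℝⁿ → ℝ be M_f-self-concordant-like. For any x, y in its domain, with r := M_f‖y − x‖₂ and λ := ‖y − x‖_x, we have ω_*(r)·λ² ≤ f(y) − f(x) − ⟨∇f(x), y − x⟩ ≤ ω(r)·λ², where ω_*(τ) := (e^{−τ} + τ − 1)/τ² and ω(τ) := (e^{τ} − τ − 1)/τ². -/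
open scoped RealInnerProductSpace

/-- Helper: if `F' = G ≤ 0` on `[0,1]` then `F t ≤ F 0` there. -/
lemma aux_le_of_deriv_nonpos {F G : ℝ → ℝ} (hF : ∀ t, HasDerivAt F (G t) t)
    (hG : ∀ t ∈ Set.Icc (0:ℝ) 1, G t ≤ 0) : ∀ t ∈ Set.Icc (0:ℝ) 1, F t ≤ F 0 := by
  intro t ht
  have hanti : AntitoneOn F (Set.Icc (0:ℝ) 1) := by
    apply antitoneOn_of_deriv_nonpos (convex_Icc 0 1)
    · exact (fun s _ => (hF s).continuousAt.continuousWithinAt)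
    · exact fun s _ => ((hF s).differentiableAt).differentiableWithinAt
    · intro s hs
      rw [interior_Icc] at hs
      rw [(hF s).deriv]
      exact hG s ⟨hs.1.le, hs.2.le⟩
  exact hanti (Set.left_mem_Icc.mpr zero_le_one) ht ht.1

/-- Helper: if `F' = G ≥ 0` on `[0,1]` then `F 0 ≤ F t` there. -/
lemma aux_ge_of_deriv_nonneg {F G : ℝ → ℝ} (hF : ∀ t, HasDerivAt F (G t) t)
    (hG : ∀ t ∈ Set.Icc (0:ℝ) 1, 0 ≤ G t) : ∀ t ∈ Set.Icc (0:ℝ) 1, F 0 ≤ F t := by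
  intro t ht
  have := aux_le_of_deriv_nonpos (F := fun t => -F t) (G := fun t => -G t)
    (fun t => (hF t).neg) (fun t ht => neg_nonpos.mpr (hG t ht)) t ht
  have h2 : -F t ≤ -F 0 := this
  linarith

/-- Helper: a Grönwall-type two-sided bound. -/
lemma aux_gronwall {ψ dψ : ℝ → ℝ} {r : ℝ} (hr : 0 < r)
    (hψd : ∀ t, HasDerivAt ψ (dψ t) t) (hb : ∀ t, |dψ t| ≤ r * ψ t) :
    ∀ t ∈ Set.Icc (0:ℝ) 1,
      ψ 0 * Real.exp (-(r * t)) ≤ ψ t ∧ ψ t ≤ ψ 0 * Real.exp (r * t) := by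
  have hpos : ∀ t, 0 ≤ ψ t := fun t =>
    nonneg_of_mul_nonneg_right ((abs_nonneg _).trans (hb t)) hr
  have habs : ∀ t, ‖ψ t‖ = ψ t := fun t => abs_of_nonneg (hpos t)
  intro t ht
  constructor
  · have key := norm_le_gronwallBound_of_norm_deriv_right_le
      (f := fun s => ψ (t - s)) (f' := fun s => -dψ (t - s)) (δ := ψ t) (K := r) (ε := 0)
      (a := 0) (b := t)
      (fun s _ => (((hψd (t - s)).comp s ((hasDerivAt_id s).const_sub t)).continuousAt).continuousWithinAt)
      (fun s _ => by
        have := (hψd (t - s)).comp s ((hasDerivAt_id s).const_sub t)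
        rw [mul_neg_one] at this
        exact this.hasDerivWithinAt)
      (by simp [habs])
      (fun s _ => by
        rw [norm_neg]
        simpa [habs, add_zero] using hb (t - s))
      t (Set.right_mem_Icc.mpr ht.1)
    rw [habs, sub_self, gronwallBound_ε0, sub_zero] at key
    calc ψ 0 * Real.exp (-(r * t)) ≤ (ψ t * Real.exp (r * t)) * Real.exp (-(r * t)) :=
          mul_le_mul_of_nonneg_right key (Real.exp_nonneg _)
      _ = ψ t := by rw [mul_assoc, ← Real.exp_add]; simp
  · have key := norm_le_gronwallBound_of_norm_deriv_right_le
      (f := ψ) (f' := dψ) (δ := ψ 0) (K := r) (ε := 0) (a := 0) (b := 1)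
      (fun s _ => (hψd s).continuousAt.continuousWithinAt)
      (fun s _ => (hψd s).hasDerivWithinAt)
      (by simp [habs])
      (fun s _ => by simpa [habs, add_zero] using hb s)
      t ht
    rwa [habs, sub_zero, gronwallBound_ε0] at key

/-- Bounds on the function value:
`ω_*(r) λ² ≤ f(y) - f(x) - ⟨∇f(x), y - x⟩ ≤ ω(r) λ²` where
`ω_*(τ) = (e^{-τ} + τ - 1)/τ²`, `ω(τ) = (e^{τ} - τ - 1)/τ²`,
`r = M_f ‖y - x‖₂` and `λ² = ⟨∇²f(x)(y-x), y-x⟩`. -/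
theorem sclike_value_bound {E : Type*} [NormedAddCommGroup E] [InnerProductSpace ℝ E]
    [CompleteSpace E]
    (M : ℝ) (hM : 0 < M) (f : E → ℝ) (hf : SCLike M f) (x y : E) :
    ((Real.exp (-(M * ‖y - x‖)) + M * ‖y - x‖ - 1) / (M * ‖y - x‖) ^ 2) *
        hessQ f x (y - x) ≤
      f y - f x - ⟪gradient f x, y - x⟫ ∧
    f y - f x - ⟪gradient f x, y - x⟫ ≤
      ((Real.exp (M * ‖y - x‖) - M * ‖y - x‖ - 1) / (M * ‖y - x‖) ^ 2) *
        hessQ f x (y - x) := by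
  by_cases hyx : y = x
  · subst hyx
    constructor <;> simp [hessQ, iteratedFDeriv_two_apply]
  -- main case
  have hf3 : ContDiff ℝ 3 f := hf.1
  set u := y - x with hudef
  have hu : u ≠ 0 := sub_ne_zero.mpr hyx
  set r := M * ‖u‖ with hrdef
  have hr : 0 < r := mul_pos hM (norm_pos_iff.mpr hu)
  set φ : ℝ → ℝ := fun s : ℝ => f (x + s • u) with hφdef
  have hline : ∀ t : ℝ, HasDerivAt (fun s : ℝ => x + s • u) u t := fun t => by
    simpa using ((hasDerivAt_id t).smul_const u).const_add x
  have hφ : ContDiff ℝ 3 φ :=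
    hf3.comp (contDiff_const.add (contDiff_id.smul contDiff_const))
  have hdf : ∀ z, HasFDerivAt f (fderiv ℝ f z) z := fun z =>
    ((hf3.differentiable (by norm_num)) z).hasFDerivAt
  have hder1 : ∀ t, HasDerivAt φ (fderiv ℝ f (x + t • u) u) t := fun t =>
    (hdf (x + t • u)).comp_hasDerivAt t (hline t)
  have hderiv_φ : deriv φ = fun t => fderiv ℝ f (x + t • u) u :=
    funext fun t => (hder1 t).deriv
  have hf' : ContDiff ℝ 2 (fderiv ℝ f) := hf3.fderiv_right (by norm_num)
  have hdf2 : ∀ z, HasFDerivAt (fderiv ℝ f) (fderiv ℝ (fderiv ℝ f) z) z := fun z =>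
    ((hf'.differentiable (by norm_num)) z).hasFDerivAt
  have hd1 : ∀ t, HasDerivAt (deriv φ) (fderiv ℝ (fderiv ℝ f) (x + t • u) u u) t := by
    intro t
    rw [hderiv_φ]
    have h := (hdf2 (x + t • u)).comp_hasDerivAt t (hline t)
    simpa using h.clm_apply (hasDerivAt_const t u)
  set ψ : ℝ → ℝ := deriv^[2] φ with hψdef
  have hψψ : ψ = deriv (deriv φ) := by
    rw [hψdef, show (2:ℕ) = 1 + 1 from rfl, Function.iterate_succ_apply', Function.iterate_one]
  have hψeq : ∀ t, ψ t = fderiv ℝ (fderiv ℝ f) (x + t • u) u u := fun t => by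
    rw [hψψ]; exact (hd1 t).deriv
  have hψ0 : ψ 0 = hessQ f x u := by
    rw [hψeq 0, hessQ, iteratedFDeriv_two_apply]
    simp
  have hψC1 : ContDiff ℝ 1 ψ := by
    rw [hψdef]; exact_mod_cast ContDiff.iterate_deriv' 1 2 (by exact_mod_cast hφ)
  have hψd : ∀ t, HasDerivAt ψ (deriv ψ t) t := fun t =>
    ((hψC1.differentiable one_ne_zero) t).hasDerivAt
  have hψ3 : ∀ t, deriv ψ t = deriv^[3] φ t := fun t => by
    rw [show (3:ℕ) = 2 + 1 from rfl, Function.iterate_succ_apply', hψdef]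
  -- the self-concordance bound along the line
  have hb : ∀ t, |deriv ψ t| ≤ r * ψ t := by
    intro t
    have h := hf.2.2 x u t
    rw [← hφdef, ← hψdef] at h
    rw [hψ3 t]
    calc |deriv^[3] φ t| ≤ M * ψ t * ‖u‖ := h
      _ = r * ψ t := by rw [hrdef]; ring
  have hgron := aux_gronwall hr hψd hb
  set c := ψ 0 with hcdef
  have hd1ψ : ∀ t, HasDerivAt (deriv φ) (ψ t) t := fun t => by
    rw [hψeq t]; exact hd1 t
  have hder1φ : ∀ t, HasDerivAt φ (deriv φ t) t := fun t => by
    rw [hderiv_φ]; exact hder1 t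
  have hexp : ∀ t : ℝ, HasDerivAt (fun t => Real.exp (r * t)) (Real.exp (r * t) * r) t :=
    fun t => by simpa using ((hasDerivAt_id t).const_mul r).exp
  have hexpneg : ∀ t : ℝ, HasDerivAt (fun t => Real.exp (-(r * t))) (Real.exp (-(r * t)) * -r) t :=
    fun t => by simpa using ((hasDerivAt_id t).const_mul r).neg.exp
  -- upper bound
  have hG : ∀ t, HasDerivAt (fun t => deriv φ t - deriv φ 0 - c / r * (Real.exp (r * t) - 1))
      (ψ t - c * Real.exp (r * t)) t := by
    intro t
    have h := ((hd1ψ t).sub_const (deriv φ 0)).sub (((hexp t).sub_const 1).const_mul (c / r))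
    refine HasDerivAt.congr_deriv h ?_
    field_simp
  have hGle : ∀ t ∈ Set.Icc (0:ℝ) 1,
      deriv φ t - deriv φ 0 - c / r * (Real.exp (r * t) - 1) ≤ 0 := by
    intro t ht
    have h := aux_le_of_deriv_nonpos hG
      (fun s hs => sub_nonpos.mpr ((hgron s hs).2)) t ht
    simpa using h
  have hH : ∀ t, HasDerivAt
      (fun t => φ t - φ 0 - deriv φ 0 * t - c / r ^ 2 * (Real.exp (r * t) - r * t - 1))
      (deriv φ t - deriv φ 0 - c / r * (Real.exp (r * t) - 1)) t := by
    intro t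
    have h := (((hder1φ t).sub_const (φ 0)).sub ((hasDerivAt_id t).const_mul (deriv φ 0))).sub
      ((((hexp t).sub ((hasDerivAt_id t).const_mul r)).sub_const 1).const_mul (c / r ^ 2))
    refine HasDerivAt.congr_deriv h ?_
    field_simp
  have hup := aux_le_of_deriv_nonpos hH hGle 1 (Set.right_mem_Icc.mpr zero_le_one)
  simp only [mul_one, mul_zero, Real.exp_zero] at hup
  -- lower bound
  have hK : ∀ t, HasDerivAt (fun t => deriv φ t - deriv φ 0 - c / r * (1 - Real.exp (-(r * t))))
      (ψ t - c * Real.exp (-(r * t))) t := by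
    intro t
    have h := ((hd1ψ t).sub_const (deriv φ 0)).sub (((hexpneg t).const_sub 1).const_mul (c / r))
    refine HasDerivAt.congr_deriv h ?_
    field_simp
  have hKge : ∀ t ∈ Set.Icc (0:ℝ) 1,
      0 ≤ deriv φ t - deriv φ 0 - c / r * (1 - Real.exp (-(r * t))) := by
    intro t ht
    have h := aux_ge_of_deriv_nonneg hK
      (fun s hs => sub_nonneg.mpr ((hgron s hs).1)) t ht
    simpa using h
  have hL : ∀ t, HasDerivAt
      (fun t => φ t - φ 0 - deriv φ 0 * t - c / r ^ 2 * (Real.exp (-(r * t)) + r * t - 1))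
      (deriv φ t - deriv φ 0 - c / r * (1 - Real.exp (-(r * t)))) t := by
    intro t
    have h := (((hder1φ t).sub_const (φ 0)).sub ((hasDerivAt_id t).const_mul (deriv φ 0))).sub
      (((((hexpneg t)).add ((hasDerivAt_id t).const_mul r)).sub_const 1).const_mul (c / r ^ 2))
    refine HasDerivAt.congr_deriv h ?_
    field_simp
    ring
  have hlo := aux_ge_of_deriv_nonneg hL hKge 1 (Set.right_mem_Icc.mpr zero_le_one)
  simp only [mul_one, mul_zero, neg_zero, Real.exp_zero] at hlo
  -- assembly
  have hφ1 : φ 1 = f y := by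
    rw [hφdef]
    simp [hudef]
  have hφ0 : φ 0 = f x := by
    rw [hφdef]; simp
  have hgrad : deriv φ 0 = ⟪gradient f x, u⟫ := by
    rw [hderiv_φ]
    simp only [zero_smul, add_zero]
    exact (InnerProductSpace.toDual_symm_apply).symm
  rw [hφ1, hφ0, hgrad] at hup hlo
  constructor
  · have e : (Real.exp (-r) + r - 1) / r ^ 2 * hessQ f x u
        = hessQ f x u / r ^ 2 * (Real.exp (-r) + r - 1) := by ring
    rw [e, ← hψ0]
    linarith
  · have e : (Real.exp r - r - 1) / r ^ 2 * hessQ f x u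
        = hessQ f x u / r ^ 2 * (Real.exp r - r - 1) := by ring
    rw [e, ← hψ0]
    linarith
end

section
/- Fix positive constants β, λ, r. Define ψ(τ) := β²τ − λ²·ω(rτ)·τ², where ω(s) = (e^{s} − s − 1)/s². Then ψ is concave on [0, ∞), attains its maximum at τ* = (1/r)·ln(1 + rβ²/λ²), and the maximum value is ψ(τ*) = (β²/r)·[(1 + λ²/(rβ²))·ln(1 + β²r/λ²) − 1]. Moreover, τ* ≤ 1 if and only if β²·r ≤ (e^{r} − 1)·λ². -/
/-!
`ψ` is an affine function minus the positive multiple `λ²/r² · e^{rτ}` of a convex function,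
hence concave. Its critical point `τ*` is where `e^{rτ*} = 1 + rβ²/λ²`, and the tangent-line
inequality `e^a ≥ e^b (1 + a - b)` at `b = rτ*` shows that `τ*` is a global maximizer. The value
`ψ(τ*)` and the criterion for `τ* ≤ 1` are then algebra with `log` and `exp`.
-/

open Real Set

/-- `ψ(τ) = β²τ - λ²·ω(rτ)·τ²`, with `ω(rτ)·τ²` written out as `(e^{rτ} - rτ - 1)/r²`. -/
noncomputable def descentFun (β lam r τ : ℝ) : ℝ :=
  β ^ 2 * τ - lam ^ 2 * (exp (r * τ) - r * τ - 1) / r ^ 2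

noncomputable def descentStep (β lam r : ℝ) : ℝ :=
  (1 / r) * log (1 + r * β ^ 2 / lam ^ 2)

theorem concaveOn_descentFun (β lam r : ℝ) : ConcaveOn ℝ univ (descentFun β lam r) := by
  have hexp : ConvexOn ℝ univ fun τ : ℝ => exp (r * τ) :=
    convexOn_exp.comp_linearMap (LinearMap.mulLeft ℝ r)
  have haff :
      ConcaveOn ℝ univ fun τ : ℝ => (β ^ 2 + lam ^ 2 / r ^ 2 * r) * τ + lam ^ 2 / r ^ 2 :=
    ((LinearMap.mulLeft ℝ (β ^ 2 + lam ^ 2 / r ^ 2 * r)).concaveOn convex_univ).add_const _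
  have hψ : descentFun β lam r = (fun τ => (β ^ 2 + lam ^ 2 / r ^ 2 * r) * τ + lam ^ 2 / r ^ 2) -
      fun τ => (lam ^ 2 / r ^ 2) • exp (r * τ) := by
    ext τ
    simp only [descentFun, Pi.sub_apply, smul_eq_mul]
    ring
  rw [hψ]
  exact haff.sub (hexp.smul (by positivity))

variable {β lam r : ℝ}

theorem Real.exp_mul_sub_add_one_le_exp (a b : ℝ) : exp b * (a - b + 1) ≤ exp a :=
  calc exp b * (a - b + 1) ≤ exp b * exp (a - b) := by gcongr; exact add_one_le_exp _
    _ = exp a := by rw [← exp_add, add_sub_cancel]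

theorem descentFun_le_of_exp_eq (hlam : lam ≠ 0) (hr : r ≠ 0) {t : ℝ}
    (ht : exp (r * t) = 1 + r * β ^ 2 / lam ^ 2) (τ : ℝ) :
    descentFun β lam r τ ≤ descentFun β lam r t := by
  have key : descentFun β lam r t - descentFun β lam r τ =
      lam ^ 2 / r ^ 2 * (exp (r * τ) - exp (r * t) * (r * τ - r * t + 1)) := by
    rw [descentFun, descentFun, ht]
    field_simp
    ring
  rw [← sub_nonneg, key]
  exact mul_nonneg (by positivity) (sub_nonneg.2 (exp_mul_sub_add_one_le_exp (r * τ) (r * t)))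

theorem exp_mul_descentStep (hr : 0 < r) :
    exp (r * descentStep β lam r) = 1 + r * β ^ 2 / lam ^ 2 := by
  rw [descentStep, ← mul_assoc, mul_one_div_cancel hr.ne', one_mul, exp_log (by positivity)]

theorem descentFun_descentStep (hβ : β ≠ 0) (hlam : lam ≠ 0) (hr : 0 < r) :
    descentFun β lam r (descentStep β lam r) =
      (β ^ 2 / r) * ((1 + lam ^ 2 / (r * β ^ 2)) * log (1 + β ^ 2 * r / lam ^ 2) - 1) := by
  have hlog : log (1 + β ^ 2 * r / lam ^ 2) = r * descentStep β lam r := by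
    rw [descentStep, mul_comm (β ^ 2) r]
    field_simp
  rw [descentFun, exp_mul_descentStep hr, hlog]
  field_simp
  ring

theorem descentStep_le_one_iff (hlam : lam ≠ 0) (hr : 0 < r) :
    descentStep β lam r ≤ 1 ↔ β ^ 2 * r ≤ (exp r - 1) * lam ^ 2 := by
  rw [descentStep, one_div_mul_eq_div, div_le_one hr, log_le_iff_le_exp (by positivity),
    ← le_sub_iff_add_le', div_le_iff₀ (by positivity), mul_comm r]

/-- Properties of the per-iteration descent function
`ψ(τ) = β²τ - λ²·ω(rτ)·τ² = β²τ - λ²(e^{rτ} - rτ - 1)/r²`: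
it is concave on `[0, ∞)`, maximized at `τ* = (1/r)ln(1 + rβ²/λ²)` with the stated
maximum value, and `τ* ≤ 1 ↔ β²r ≤ (e^r - 1)λ²`. -/
theorem descent_function_properties (β lam r : ℝ) (hβ : 0 < β) (hlam : 0 < lam)
    (hr : 0 < r) :
    ConcaveOn ℝ (Set.Ici (0 : ℝ))
        (fun τ : ℝ => β ^ 2 * τ - lam ^ 2 * (Real.exp (r * τ) - r * τ - 1) / r ^ 2) ∧
      IsMaxOn
        (fun τ : ℝ => β ^ 2 * τ - lam ^ 2 * (Real.exp (r * τ) - r * τ - 1) / r ^ 2)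
        (Set.Ici (0 : ℝ)) ((1 / r) * Real.log (1 + r * β ^ 2 / lam ^ 2)) ∧
      (fun τ : ℝ => β ^ 2 * τ - lam ^ 2 * (Real.exp (r * τ) - r * τ - 1) / r ^ 2)
          ((1 / r) * Real.log (1 + r * β ^ 2 / lam ^ 2)) =
        (β ^ 2 / r) *
          ((1 + lam ^ 2 / (r * β ^ 2)) * Real.log (1 + β ^ 2 * r / lam ^ 2) - 1) ∧
      ((1 / r) * Real.log (1 + r * β ^ 2 / lam ^ 2) ≤ 1 ↔
        β ^ 2 * r ≤ (Real.exp r - 1) * lam ^ 2) :=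
  ⟨(concaveOn_descentFun β lam r).subset (subset_univ _) (convex_Ici 0),
    fun τ _ => descentFun_le_of_exp_eq hlam.ne' hr.ne' (exp_mul_descentStep hr) τ,
    descentFun_descentStep hβ.ne' hlam.ne' hr,
    descentStep_le_one_iff hlam.ne' hr⟩
end

section
/- Let f be M_f-self-concordant-like and g proper closed convex. Given x in dom F, a positive definite matrix D, let s := argmin_x { f(xᵏ) + ⟨∇f(xᵏ), x − xᵏ⟩ + (1/2)⟨D(x−xᵏ), x−xᵏ⟩ + g(x) }, d := s − xᵏ, λ := ‖d‖_{xᵏ} (the local Hessian norm), r := M_f‖d‖₂, β := ⟨Dd, d⟩^{1/2}. If β²r ≤ (e^{r}−1)λ², then with step size α := (1/r)·ln(1 + β²r/λ²) ∈ (0, 1], the point x⁺ := xᵏ + α·d satisfies F(x⁺) ≤ F(xᵏ) − (β²/r)·[(1 + λ²/(rβ²))·ln(1 + β²r/λ²) − 1]. -/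
open scoped RealInnerProductSpace

/-!
Along the line `t ↦ xᵏ + t • d` the self-concordance-like bound `φ''' ≤ r φ''` integrates
(an integrating-factor step, then two more integrations) to
`f (xᵏ + α d) ≤ f xᵏ + α ⟪∇f xᵏ, d⟫ + λ² (e^{rα} - rα - 1) / r²`.
Convexity of `g` together with the optimality of `s` in the proximal subproblem gives
`g (xᵏ + α d) ≤ g xᵏ - α ⟪∇f xᵏ + D d, d⟫`. Adding the two, `F` decreases by at least
`α β² - λ² (e^{rα} - rα - 1) / r²`, which is maximised by the analytic step `α`; the
hypothesis `β² r ≤ (e^r - 1) λ²` says exactly that `α ≤ 1`.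
-/

open Real Filter Topology

theorem le_of_hasDerivAt_le_of_nonneg {F G F' G' : ℝ → ℝ}
    (hF : ∀ t, HasDerivAt F (F' t) t) (hG : ∀ t, HasDerivAt G (G' t) t)
    (h₀ : F 0 ≤ G 0) (hle : ∀ t, 0 ≤ t → F' t ≤ G' t) {a : ℝ} (ha : 0 ≤ a) :
    F a ≤ G a :=
  image_le_of_deriv_right_le_deriv_boundary
    (fun t _ => (hF t).continuousAt.continuousWithinAt) (fun t _ => (hF t).hasDerivWithinAt) h₀
    (fun t _ => (hG t).continuousAt.continuousWithinAt) (fun t _ => (hG t).hasDerivWithinAt)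
    (fun t ht => hle t ht.1) ⟨ha, le_rfl⟩

theorem ContDiff.hasDerivAt_deriv_iterate {φ : ℝ → ℝ} {n : ℕ} (hφ : ContDiff ℝ n φ) {m : ℕ}
    (hm : m < n) (t : ℝ) : HasDerivAt (deriv^[m] φ) (deriv^[m + 1] φ t) t := by
  rw [Function.iterate_succ_apply', ← iteratedDeriv_eq_iterate]
  exact (hφ.differentiable_iteratedDeriv m (by exact_mod_cast hm) t).hasDerivAt

section ExpTaylor

variable {φ : ℝ → ℝ} {r : ℝ}

theorem deriv_iterate_two_le_of_deriv_iterate_three_le (hφ : ContDiff ℝ 3 φ)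
    (hbound : ∀ t, deriv^[3] φ t ≤ r * deriv^[2] φ t) {t : ℝ} (ht : 0 ≤ t) :
    deriv^[2] φ t ≤ deriv^[2] φ 0 * exp (r * t) := by
  -- `t ↦ φ''(t) e^{-rt}` is antitone on `[0, ∞)`
  have hw : ∀ s, HasDerivAt (fun s => deriv^[2] φ s * exp (-(r * s)))
      ((deriv^[3] φ s - r * deriv^[2] φ s) * exp (-(r * s))) s := by
    intro s
    have he : HasDerivAt (fun s => exp (-(r * s))) (exp (-(r * s)) * -r) s := by
      simpa using ((hasDerivAt_id s).const_mul r).neg.exp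
    exact ((hφ.hasDerivAt_deriv_iterate (m := 2) (by norm_num) s).mul he).congr_deriv (by ring)
  have := le_of_hasDerivAt_le_of_nonneg hw (fun _ => hasDerivAt_const _ (deriv^[2] φ 0))
    (by simp) (fun s _ => mul_nonpos_of_nonpos_of_nonneg (sub_nonpos.mpr (hbound s))
      (exp_pos _).le) ht
  rwa [exp_neg, ← div_eq_mul_inv, div_le_iff₀ (exp_pos _)] at this

theorem deriv_le_of_deriv_iterate_three_le (hφ : ContDiff ℝ 3 φ) (hr : r ≠ 0)
    (hbound : ∀ t, deriv^[3] φ t ≤ r * deriv^[2] φ t) {t : ℝ} (ht : 0 ≤ t) :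
    deriv φ t ≤ deriv φ 0 + deriv^[2] φ 0 * (exp (r * t) - 1) / r := by
  have hG : ∀ s, HasDerivAt (fun s => deriv φ 0 + deriv^[2] φ 0 * (exp (r * s) - 1) / r)
      (deriv^[2] φ 0 * exp (r * s)) s := by
    intro s
    have he : HasDerivAt (fun s => exp (r * s)) (exp (r * s) * r) s := by
      simpa using ((hasDerivAt_id s).const_mul r).exp
    exact ((((he.sub_const 1).const_mul (deriv^[2] φ 0)).div_const r).const_add
      (deriv φ 0)).congr_deriv (by field_simp)
  exact le_of_hasDerivAt_le_of_nonneg (hφ.hasDerivAt_deriv_iterate (m := 1) (by norm_num)) hG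
    (by simp) (fun s hs => deriv_iterate_two_le_of_deriv_iterate_three_le hφ hbound hs) ht

theorem le_taylor_exp_of_deriv_iterate_three_le (hφ : ContDiff ℝ 3 φ) (hr : r ≠ 0)
    (hbound : ∀ t, deriv^[3] φ t ≤ r * deriv^[2] φ t) {a : ℝ} (ha : 0 ≤ a) :
    φ a ≤ φ 0 + a * deriv φ 0 + deriv^[2] φ 0 * (exp (r * a) - r * a - 1) / r ^ 2 := by
  have hG : ∀ s, HasDerivAt
      (fun s => φ 0 + s * deriv φ 0 + deriv^[2] φ 0 * (exp (r * s) - r * s - 1) / r ^ 2)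
      (deriv φ 0 + deriv^[2] φ 0 * (exp (r * s) - 1) / r) s := by
    intro s
    have he : HasDerivAt (fun s => exp (r * s)) (exp (r * s) * r) s := by
      simpa using ((hasDerivAt_id s).const_mul r).exp
    have hl : HasDerivAt (fun s => r * s) r s := by simpa using (hasDerivAt_id s).const_mul r
    exact ((((hasDerivAt_id s).mul_const (deriv φ 0)).const_add (φ 0)).add
      ((((he.sub hl).sub_const 1).const_mul (deriv^[2] φ 0)).div_const (r ^ 2))).congr_deriv
      (by field_simp)
  exact le_of_hasDerivAt_le_of_nonneg (hφ.hasDerivAt_deriv_iterate (m := 0) (by norm_num)) hG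
    (by simp) (fun s hs => deriv_le_of_deriv_iterate_three_le hφ hr hbound hs) ha

end ExpTaylor

section Line

variable {E F : Type*} [NormedAddCommGroup E] [NormedSpace ℝ E] [NormedAddCommGroup F]
  [NormedSpace ℝ F]

theorem iteratedDeriv_comp_add_smul {f : E → F} {n : WithTop ℕ∞} (hf : ContDiff ℝ n f)
    (x u : E) {i : ℕ} (hi : i ≤ n) (t : ℝ) :
    iteratedDeriv i (fun s : ℝ => f (x + s • u)) t =
      iteratedFDeriv ℝ i f (x + t • u) fun _ => u := by
  have hline : (fun s : ℝ => f (x + s • u)) =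
      (fun z => f (x + z)) ∘ ContinuousLinearMap.smulRight (1 : ℝ →L[ℝ] ℝ) u := by
    ext s; simp
  have hshift : ContDiff ℝ n (fun z => f (x + z)) := hf.comp (contDiff_const.add contDiff_id)
  rw [iteratedDeriv_eq_iteratedFDeriv, hline,
    ContinuousLinearMap.iteratedFDeriv_comp_right _ hshift _ hi,
    ContinuousMultilinearMap.compContinuousLinearMap_apply, iteratedFDeriv_comp_add_left]
  simp

end Line

section SelfConcordantLike

variable {E : Type*} [NormedAddCommGroup E] [InnerProductSpace ℝ E] {M : ℝ} {f : E → ℝ}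

theorem SCLike.contDiff_comp_add_smul (hf : SCLike M f) (x u : E) :
    ContDiff ℝ 3 (fun s : ℝ => f (x + s • u)) :=
  hf.1.comp (contDiff_const.add (contDiff_id.smul contDiff_const))

theorem SCLike.hessQ_eq_deriv_iterate_two (hf : SCLike M f) (x u : E) :
    hessQ f x u = deriv^[2] (fun s : ℝ => f (x + s • u)) 0 := by
  rw [← iteratedDeriv_eq_iterate, iteratedDeriv_comp_add_smul hf.1 x u (by norm_num), hessQ]
  congr 1
  · simp
  · ext i; fin_cases i <;> rfl

theorem SCLike.fderiv_apply_eq_deriv (hf : SCLike M f) (x u : E) :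
    fderiv ℝ f x u = deriv (fun s : ℝ => f (x + s • u)) 0 := by
  rw [← iteratedDeriv_one, iteratedDeriv_comp_add_smul hf.1 x u (by norm_num),
    iteratedFDeriv_one_apply]
  simp

theorem SCLike.hessQ_nonneg (hf : SCLike M f) (x : E) {u : E} (hu : 0 < M * ‖u‖) :
    0 ≤ hessQ f x u := by
  have h := (abs_nonneg _).trans (hf.2.2 x u 0)
  rw [mul_right_comm] at h
  exact hf.hessQ_eq_deriv_iterate_two x u ▸ nonneg_of_mul_nonneg_right h hu

theorem SCLike.le_taylor_exp (hf : SCLike M f) (x u : E) (hu : M * ‖u‖ ≠ 0) {a : ℝ}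
    (ha : 0 ≤ a) :
    f (x + a • u) ≤ f x + a * fderiv ℝ f x u +
      hessQ f x u * (exp (M * ‖u‖ * a) - M * ‖u‖ * a - 1) / (M * ‖u‖) ^ 2 := by
  have hbound : ∀ t, deriv^[3] (fun s : ℝ => f (x + s • u)) t ≤
      M * ‖u‖ * deriv^[2] (fun s : ℝ => f (x + s • u)) t := fun t =>
    (le_abs_self _).trans ((hf.2.2 x u t).trans_eq (by ring))
  simpa [hf.fderiv_apply_eq_deriv, hf.hessQ_eq_deriv_iterate_two] using
    le_taylor_exp_of_deriv_iterate_three_le (hf.contDiff_comp_add_smul x u) hu hbound ha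

end SelfConcordantLike

theorem le_of_forall_le_add_mul {a b c : ℝ} (h : ∀ t, 0 < t → t ≤ 1 → a ≤ b + t * c) : a ≤ b := by
  have hlim : Tendsto (fun t => b + t * c) (𝓝[>] 0) (𝓝 (b + 0 * c)) :=
    ((tendsto_id.mul_const c).const_add b).mono_left nhdsWithin_le_nhds
  rw [zero_mul, add_zero] at hlim
  refine ge_of_tendsto hlim ?_
  filter_upwards [Ioo_mem_nhdsGT (zero_lt_one' ℝ)] with t ht using h t ht.1 ht.2.le

section ProximalStep

variable {E : Type*} [NormedAddCommGroup E] [InnerProductSpace ℝ E]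

noncomputable def quadModel (c : ℝ) (v : E) (D : E →L[ℝ] E) (x₀ x : E) : ℝ :=
  c + ⟪v, x - x₀⟫ + (1 / 2) * ⟪D (x - x₀), x - x₀⟫

theorem quadModel_add_smul (c : ℝ) (v : E) (D : E →L[ℝ] E) (x₀ d : E) (t : ℝ) :
    quadModel c v D x₀ (x₀ + t • d) = c + t * ⟪v, d⟫ + (1 / 2) * (t ^ 2 * ⟪D d, d⟫) := by
  simp only [quadModel, add_sub_cancel_left, map_smul, real_inner_smul_left,
    real_inner_smul_right]
  ring

/-- The optimality condition `-(v + D d) ∈ ∂g(s)` of the proximal subproblem, evaluated at `x₀`,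
obtained by comparing `s` with the points `x₀ + (1 - t) • d` on the segment `[x₀, s]`. -/
theorem exists_eq_coe_le_of_minimizes_quadModel_add {g : E → EReal}
    (hg : ∀ x y : E, ∀ a b : ℝ, 0 ≤ a → 0 ≤ b → a + b = 1 →
      g (a • x + b • y) ≤ (a : EReal) * g x + (b : EReal) * g y)
    {c : ℝ} {v x₀ s : E} {D : E →L[ℝ] E} {G₀ : ℝ} (hx₀ : g x₀ = G₀) (hs_bot : g s ≠ ⊥)
    (hs : ∀ x, (quadModel c v D x₀ s : EReal) + g s ≤ (quadModel c v D x₀ x : EReal) + g x) :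
    ∃ Gs : ℝ, g s = Gs ∧ Gs ≤ G₀ - ⟪v, s - x₀⟫ - ⟪D (s - x₀), s - x₀⟫ := by
  have hs_top : g s ≠ ⊤ := fun htop => by
    simpa [htop, hx₀, EReal.add_top_of_ne_bot, ← EReal.coe_add] using hs x₀
  obtain ⟨Gs, hGs⟩ : ∃ a : ℝ, g s = a := ⟨_, (EReal.coe_toReal hs_top hs_bot).symm⟩
  refine ⟨Gs, hGs, ?_⟩
  set d := s - x₀ with hd
  refine le_of_forall_le_add_mul (c := ⟪D d, d⟫ / 2) fun t ht₀ ht₁ => ?_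
  have hseg : t • x₀ + (1 - t) • s = x₀ + (1 - t) • d := by rw [hd]; module
  have hconv := hg x₀ s t (1 - t) ht₀.le (by linarith) (by ring)
  have hmin := hs (x₀ + (1 - t) • d)
  rw [hseg, hx₀, hGs] at hconv
  rw [hGs, quadModel_add_smul] at hmin
  have hreal : quadModel c v D x₀ s + Gs ≤
      c + (1 - t) * ⟪v, d⟫ + 1 / 2 * ((1 - t) ^ 2 * ⟪D d, d⟫) + (t * G₀ + (1 - t) * Gs) := by
    have hconv' : g (x₀ + (1 - t) • d) ≤ ((t * G₀ + (1 - t) * Gs : ℝ) : EReal) := by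
      exact_mod_cast hconv
    exact_mod_cast hmin.trans (add_le_add_right hconv' _)
  simp only [quadModel, ← hd] at hreal
  nlinarith

end ProximalStep

section AnalyticStep

variable {r B L α : ℝ}

theorem analytic_step_pos (hr : 0 < r) (hB : 0 < B) (hL : 0 < L)
    (hα : α = 1 / r * log (1 + B * r / L)) : 0 < α :=
  hα ▸ mul_pos (by positivity) (log_pos (by simp only [lt_add_iff_pos_right]; positivity))

theorem analytic_step_le_one (hr : 0 < r) (hB : 0 < B) (hL : 0 < L)
    (hcond : B * r ≤ (exp r - 1) * L) (hα : α = 1 / r * log (1 + B * r / L)) : α ≤ 1 := by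
  have hlog : log (1 + B * r / L) ≤ r := by
    rw [log_le_iff_le_exp (by positivity)]
    linarith [(div_le_iff₀ hL).mpr hcond]
  rw [hα, one_div_mul_eq_div, div_le_one hr]
  exact hlog

/-- `α` maximises the guaranteed decrease `α B - L (e^{rα} - rα - 1) / r²`: its derivative
`B - L (e^{rα} - 1) / r` vanishes exactly when `e^{rα} = 1 + B r / L`. -/
theorem analytic_step_decrease_eq (hr : 0 < r) (hB : 0 < B) (hL : 0 < L)
    (hα : α = 1 / r * log (1 + B * r / L)) :
    α * B - L * (exp (r * α) - r * α - 1) / r ^ 2 =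
      B / r * ((1 + L / (r * B)) * log (1 + B * r / L) - 1) := by
  have hrα : r * α = log (1 + B * r / L) := by rw [hα]; field_simp
  rw [hrα, exp_log (by positivity), ← hrα]
  field_simp
  ring

end AnalyticStep

theorem prox_gradient_descent_lemma_general {E : Type*}
    [NormedAddCommGroup E] [InnerProductSpace ℝ E] [CompleteSpace E]
    (M : ℝ) (hM : 0 < M) (f : E → ℝ) (hf : SCLike M f)
    (g : E → EReal)
    (hg_proper_bot : ∀ x, g x ≠ ⊥)
    (hg_convex : ∀ x y : E, ∀ a b : ℝ, 0 ≤ a → 0 ≤ b → a + b = 1 →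
      g (a • x + b • y) ≤ (a : EReal) * g x + (b : EReal) * g y)
    (xk : E) (hxk : g xk ≠ ⊤)
    (D : E →L[ℝ] E)
    (hDpos : ∀ v : E, v ≠ 0 → 0 < ⟪D v, v⟫)
    (s : E)
    (hs : ∀ x : E,
      ((f xk + ⟪gradient f xk, s - xk⟫ + (1 / 2) * ⟪D (s - xk), s - xk⟫ : ℝ) : EReal)
          + g s ≤
        ((f xk + ⟪gradient f xk, x - xk⟫ + (1 / 2) * ⟪D (x - xk), x - xk⟫ : ℝ) : EReal)
          + g x)
    (d : E) (hd : d = s - xk) (hd0 : d ≠ 0)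
    (lam r β α : ℝ)
    (hlam : lam = Real.sqrt (hessQ f xk d))
    (hr : r = M * ‖d‖)
    (hβ : β = Real.sqrt ⟪D d, d⟫)
    (hcond : β ^ 2 * r ≤ (Real.exp r - 1) * lam ^ 2)
    (hα : α = (1 / r) * Real.log (1 + β ^ 2 * r / lam ^ 2)) :
    0 < α ∧ α ≤ 1 ∧
      (f (xk + α • d) : EReal) + g (xk + α • d) ≤
        ((f xk : EReal) + g xk) -
          ((β ^ 2 / r) *
            ((1 + lam ^ 2 / (r * β ^ 2)) * Real.log (1 + β ^ 2 * r / lam ^ 2) - 1) : ℝ) := by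
  have hr_pos : 0 < r := hr ▸ mul_pos hM (norm_pos_iff.mpr hd0)
  have hβ_sq : β ^ 2 = ⟪D d, d⟫ := hβ ▸ sq_sqrt (hDpos d hd0).le
  have hlam_sq : lam ^ 2 = hessQ f xk d := hlam ▸ sq_sqrt (hf.hessQ_nonneg xk (hr ▸ hr_pos))
  have hβ_pos : 0 < β ^ 2 := hβ_sq ▸ hDpos d hd0
  have hlam_pos : 0 < lam ^ 2 := pos_of_mul_pos_right ((mul_pos hβ_pos hr_pos).trans_le hcond)
    (sub_nonneg.mpr (one_le_exp hr_pos.le))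
  have hα_pos := analytic_step_pos hr_pos hβ_pos hlam_pos hα
  have hα_le := analytic_step_le_one hr_pos hβ_pos hlam_pos hcond hα
  obtain ⟨Gk, hGk⟩ : ∃ a : ℝ, g xk = a := ⟨_, (EReal.coe_toReal hxk (hg_proper_bot xk)).symm⟩
  obtain ⟨Gs, hGs, hGs_le⟩ :=
    exists_eq_coe_le_of_minimizes_quadModel_add hg_convex hGk (hg_proper_bot s) hs
  rw [← hd, ← hβ_sq] at hGs_le
  have hg_step : g (xk + α • d) ≤ (((1 - α) * Gk + α * Gs : ℝ) : EReal) := by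
    have hseg : (1 - α) • xk + α • s = xk + α • d := by rw [hd]; module
    have := hg_convex xk s (1 - α) α (by linarith) hα_pos.le (by ring)
    rw [hseg, hGk, hGs] at this
    exact_mod_cast this
  have hf_step : f (xk + α • d) ≤ f xk + α * ⟪gradient f xk, d⟫ +
      lam ^ 2 * (exp (r * α) - r * α - 1) / r ^ 2 := by
    simpa only [hr, hlam_sq, inner_gradient_left] using
      hf.le_taylor_exp xk d (hr ▸ hr_pos.ne') hα_pos.le
  refine ⟨hα_pos, hα_le, ?_⟩
  rw [hGk, ← analytic_step_decrease_eq hr_pos hβ_pos hlam_pos hα]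
  calc (f (xk + α • d) : EReal) + g (xk + α • d)
      ≤ ((f (xk + α • d) + ((1 - α) * Gk + α * Gs) : ℝ) : EReal) := by
        exact_mod_cast add_le_add_right hg_step _
    _ ≤ _ := by
        have hαGs := mul_le_mul_of_nonneg_left hGs_le hα_pos.le
        norm_cast
        linarith

/-- Descent lemma for the proximal variable-metric step with the analytic step size:
if `β²r ≤ (e^r - 1)λ²`, then `α = (1/r)ln(1 + β²r/λ²) ∈ (0,1]` and
`F(xᵏ + α d) ≤ F(xᵏ) - (β²/r)[(1 + λ²/(rβ²)) ln(1 + β²r/λ²) - 1]`. -/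
theorem prox_gradient_descent_lemma {E : Type*}
    [NormedAddCommGroup E] [InnerProductSpace ℝ E] [CompleteSpace E]
    (M : ℝ) (hM : 0 < M) (f : E → ℝ) (hf : SCLike M f)
    (g : E → EReal)
    (hg_proper_top : ∃ x, g x ≠ ⊤) (hg_proper_bot : ∀ x, g x ≠ ⊥)
    (hg_lsc : LowerSemicontinuous g)
    (hg_convex : ∀ x y : E, ∀ a b : ℝ, 0 ≤ a → 0 ≤ b → a + b = 1 →
      g (a • x + b • y) ≤ (a : EReal) * g x + (b : EReal) * g y)
    (xk : E) (hxk : g xk ≠ ⊤)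
    (D : E →L[ℝ] E) (hDsym : ∀ u v : E, ⟪D u, v⟫ = ⟪u, D v⟫)
    (hDpos : ∀ v : E, v ≠ 0 → 0 < ⟪D v, v⟫)
    (s : E)
    (hs : ∀ x : E,
      ((f xk + ⟪gradient f xk, s - xk⟫ + (1 / 2) * ⟪D (s - xk), s - xk⟫ : ℝ) : EReal)
          + g s ≤
        ((f xk + ⟪gradient f xk, x - xk⟫ + (1 / 2) * ⟪D (x - xk), x - xk⟫ : ℝ) : EReal)
          + g x)
    (d : E) (hd : d = s - xk) (hd0 : d ≠ 0)
    (lam r β α : ℝ)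
    (hlam : lam = Real.sqrt (hessQ f xk d))
    (hr : r = M * ‖d‖)
    (hβ : β = Real.sqrt ⟪D d, d⟫)
    (hcond : β ^ 2 * r ≤ (Real.exp r - 1) * lam ^ 2)
    (hα : α = (1 / r) * Real.log (1 + β ^ 2 * r / lam ^ 2)) :
    0 < α ∧ α ≤ 1 ∧
      (f (xk + α • d) : EReal) + g (xk + α • d) ≤
        ((f xk : EReal) + g xk) -
          ((β ^ 2 / r) *
            ((1 + lam ^ 2 / (r * β ^ 2)) * Real.log (1 + β ^ 2 * r / lam ^ 2) - 1) : ℝ) :=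
  prox_gradient_descent_lemma_general M hM f hf g hg_proper_bot hg_convex xk hxk D hDpos s hs d hd
    hd0 lam r β α hlam hr hβ hcond hα
end

section
/- Under the hypotheses of the proximal-Newton step (D = ∇²f(xᵏ), so β = λ), with r := M_f‖d‖₂ and λ := ‖d‖_{xᵏ}, the step size α := (1/r)·ln(1 + r) lies in (0, 1] and yields F(xᵏ + α·d) ≤ F(xᵏ) − (λ²/r)·[(1 + 1/r)·ln(1 + r) − 1]. -/
open scoped RealInnerProductSpace

/-- The derivative of a monotone function is nonnegative. -/
lemma aux_monotone_hasDerivAt_nonneg {u : ℝ → ℝ} (hu : Monotone u) {c t : ℝ}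
    (h : HasDerivAt u c t) : 0 ≤ c := by
  have h' := hasDerivAt_iff_tendsto_slope.mp h
  have h'' : Filter.Tendsto (slope u t) (nhdsWithin t (Set.Ioi t)) (nhds c) :=
    h'.mono_left (nhdsWithin_mono t fun x hx => ne_of_gt hx)
  refine ge_of_tendsto h'' ?_
  filter_upwards [self_mem_nhdsWithin] with x hx
  have : t < x := hx
  rw [slope_def_field]
  exact div_nonneg (sub_nonneg.mpr (hu this.le)) (sub_nonneg.mpr this.le)

/-- Second derivative of a C² convex function on ℝ is nonnegative. -/
lemma aux_second_deriv_nonneg {φ : ℝ → ℝ} (hφ : ContDiff ℝ 3 φ)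
    (hconv : ConvexOn ℝ Set.univ φ) (t : ℝ) : 0 ≤ deriv (deriv φ) t := by
  have hφ1 : ContDiff ℝ 2 (deriv φ) := by
    have : ContDiff ℝ ((2 : ℕ) + (1 : ℕ) : ℕ) φ := by exact_mod_cast hφ
    exact_mod_cast ContDiff.iterate_deriv' 2 1 this
  have hmono : Monotone (deriv φ) := by
    have := hconv.monotoneOn_deriv (fun x _ =>
      (hφ.differentiable (by norm_num)).differentiableAt)
    exact monotoneOn_univ.mp this
  exact aux_monotone_hasDerivAt_nonneg hmono
    ((hφ1.differentiable (by norm_num) t).hasDerivAt)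

/-- Key one-dimensional bound for self-concordant-like functions. -/
lemma aux_oneDim_bound {φ : ℝ → ℝ} (hφ : ContDiff ℝ 3 φ)
    (hconv : ConvexOn ℝ Set.univ φ) {r0 : ℝ} (hr0 : 0 < r0)
    (h3 : ∀ t, |deriv^[3] φ t| ≤ r0 * deriv^[2] φ t)
    {a : ℝ} (ha : 0 ≤ a) :
    φ a ≤ φ 0 + a * deriv φ 0 +
      (deriv (deriv φ) 0 / r0 ^ 2) * (Real.exp (r0 * a) - r0 * a - 1) := by
  set ψ : ℝ → ℝ := deriv (deriv φ) with hψdef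
  have hψ2 : deriv^[2] φ = ψ := rfl
  have hψ3 : deriv^[3] φ = deriv ψ := rfl
  have hφ3 : ContDiff ℝ ((0 : ℕ) + (3 : ℕ) : ℕ) φ := by exact_mod_cast hφ
  have hφ2 : ContDiff ℝ ((1 : ℕ) + (2 : ℕ) : ℕ) φ := by exact_mod_cast hφ
  have hφ1 : ContDiff ℝ ((2 : ℕ) + (1 : ℕ) : ℕ) φ := by exact_mod_cast hφ
  have hψC : ContDiff ℝ 1 ψ := by exact_mod_cast ContDiff.iterate_deriv' 1 2 hφ2
  have hφ'C : ContDiff ℝ 2 (deriv φ) := by exact_mod_cast ContDiff.iterate_deriv' 2 1 hφ1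
  have hψdiff : Differentiable ℝ ψ := hψC.differentiable (by norm_num)
  have hφ'diff : Differentiable ℝ (deriv φ) := hφ'C.differentiable (by norm_num)
  have hφdiff : Differentiable ℝ φ := hφ.differentiable (by norm_num)
  have hψnn : ∀ t, 0 ≤ ψ t := aux_second_deriv_nonneg hφ hconv
  -- Grönwall: ψ t ≤ ψ 0 * exp (r0 * t) for t ≥ 0
  have gron : ∀ t, 0 ≤ t → ψ t ≤ ψ 0 * Real.exp (r0 * t) := by
    intro t ht
    have hh : ∀ x : ℝ, HasDerivAt (fun y => ψ y * Real.exp (-r0 * y))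
        (deriv ψ x * Real.exp (-r0 * x) + ψ x * (Real.exp (-r0 * x) * (-r0))) x := by
      intro x
      have := ((hψdiff x).hasDerivAt).mul
        (((hasDerivAt_id x).const_mul (-r0)).exp)
      simp only [id_eq, mul_one] at this
      exact this
    have hanti : AntitoneOn (fun y => ψ y * Real.exp (-r0 * y)) (Set.Ici 0) := by
      apply antitoneOn_of_deriv_nonpos (convex_Ici 0)
      · exact (hψdiff.continuous.mul (by continuity)).continuousOn
      · intro x _
        exact ((hh x).differentiableAt).differentiableWithinAt
      · intro x _
        rw [(hh x).deriv]
        have h1 : deriv ψ x ≤ r0 * ψ x := by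
          have := h3 x
          rw [hψ2, hψ3] at this
          exact (le_abs_self _).trans this
        have h2 : 0 < Real.exp (-r0 * x) := Real.exp_pos _
        nlinarith [hψnn x]
    have := hanti (Set.self_mem_Ici) (Set.mem_Ici.mpr ht) ht
    simp only [mul_zero, neg_mul, Real.exp_zero, mul_one] at this
    calc ψ t = ψ t * Real.exp (-(r0*t)) * Real.exp (r0*t) := by
                rw [mul_assoc, ← Real.exp_add]; simp
      _ ≤ ψ 0 * Real.exp (r0*t) :=
          mul_le_mul_of_nonneg_right this (Real.exp_pos _).le
  -- first integration
  set L : ℝ := ψ 0 with hL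
  have hLnn : 0 ≤ L := hψnn 0
  have hu : ∀ x : ℝ, HasDerivAt
      (fun y => deriv φ 0 + (L / r0) * (Real.exp (r0 * y) - 1) - deriv φ y)
      ((L / r0) * (Real.exp (r0 * x) * r0) - ψ x) x := by
    intro x
    have e1 : HasDerivAt (fun y : ℝ => Real.exp (r0 * y) - 1) (Real.exp (r0 * x) * r0) x := by
      simpa using (((hasDerivAt_id x).const_mul r0).exp).sub_const 1
    exact (((e1.const_mul (L / r0)).const_add (deriv φ 0)).sub ((hφ'diff x).hasDerivAt))
  have step1 : ∀ t, 0 ≤ t → deriv φ t ≤ deriv φ 0 + (L / r0) * (Real.exp (r0 * t) - 1) := by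
    intro t ht
    have hmono : MonotoneOn
        (fun y => deriv φ 0 + (L / r0) * (Real.exp (r0 * y) - 1) - deriv φ y) (Set.Ici 0) := by
      apply monotoneOn_of_deriv_nonneg (convex_Ici 0)
      · exact Continuous.continuousOn (by fun_prop)
      · intro x _
        exact ((hu x).differentiableAt).differentiableWithinAt
      · intro x hx
        rw [(hu x).deriv]
        have hx0 : (0:ℝ) ≤ x := le_of_lt (by simpa using hx)
        have := gron x hx0
        have : ψ x ≤ L * Real.exp (r0 * x) := this
        have hr0' : r0 ≠ 0 := ne_of_gt hr0
        have : (L / r0) * (Real.exp (r0 * x) * r0) = L * Real.exp (r0 * x) := by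
          field_simp
        rw [this]
        linarith [gron x hx0]
    have h00 := hmono Set.self_mem_Ici (Set.mem_Ici.mpr ht) ht
    simp only [mul_zero, Real.exp_zero, sub_self, mul_zero, add_zero] at h00
    linarith
  -- second integration
  have hv : ∀ x : ℝ, HasDerivAt
      (fun y => φ 0 + y * deriv φ 0 + (L / r0 ^ 2) * (Real.exp (r0 * y) - r0 * y - 1) - φ y)
      (deriv φ 0 + (L / r0 ^ 2) * (Real.exp (r0 * x) * r0 - r0) - deriv φ x) x := by
    intro x
    have e1 : HasDerivAt (fun y : ℝ => Real.exp (r0 * y) - r0 * y - 1)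
        (Real.exp (r0 * x) * r0 - r0) x := by
      have := ((((hasDerivAt_id x).const_mul r0).exp).sub
        ((hasDerivAt_id x).const_mul r0)).sub_const 1
      simpa using this
    have e2 : HasDerivAt (fun y : ℝ => φ 0 + y * deriv φ 0) (deriv φ 0) x := by
      simpa using ((hasDerivAt_id x).mul_const (deriv φ 0)).const_add (φ 0)
    exact ((e2.add (e1.const_mul (L / r0 ^ 2))).sub ((hφdiff x).hasDerivAt))
  have hmono2 : MonotoneOn
      (fun y => φ 0 + y * deriv φ 0 + (L / r0 ^ 2) * (Real.exp (r0 * y) - r0 * y - 1) - φ y)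
      (Set.Ici 0) := by
    apply monotoneOn_of_deriv_nonneg (convex_Ici 0)
    · exact Continuous.continuousOn (by
        have := hφdiff.continuous
        fun_prop)
    · intro x _
      exact ((hv x).differentiableAt).differentiableWithinAt
    · intro x hx
      rw [(hv x).deriv]
      have hx0 : (0:ℝ) ≤ x := le_of_lt (by simpa using hx)
      have hs := step1 x hx0
      have hr0' : r0 ≠ 0 := ne_of_gt hr0
      have heq : (L / r0 ^ 2) * (Real.exp (r0 * x) * r0 - r0)
          = (L / r0) * (Real.exp (r0 * x) - 1) := by
        field_simp
      rw [heq]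
      linarith
  have h00 := hmono2 Set.self_mem_Ici (Set.mem_Ici.mpr ha) ha
  simp only [mul_zero, Real.exp_zero, zero_mul, sub_zero, sub_self, add_zero,
    zero_mul, mul_zero] at h00
  have h00' : 0 ≤ φ 0 + a * deriv φ 0 + (L / r0 ^ 2) * (Real.exp (r0 * a) - r0 * a - 1) - φ a := by
    have : φ 0 + 0 * deriv φ 0 + (L / r0 ^ 2) * (Real.exp (r0 * 0) - r0 * 0 - 1) - φ 0 = 0 := by
      simp
    linarith [h00]
  linarith

section AuxMain
variable {E : Type*} [NormedAddCommGroup E] [InnerProductSpace ℝ E] [CompleteSpace E]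

lemma aux_line_contDiff (f : E → ℝ) (hf : ContDiff ℝ 3 f) (xk d : E) :
    ContDiff ℝ 3 (fun s : ℝ => f (xk + s • d)) :=
  hf.comp (contDiff_const.add (contDiff_id.smul contDiff_const))

lemma aux_line_deriv (f : E → ℝ) (hf : ContDiff ℝ 3 f) (xk d : E) (t : ℝ) :
    HasDerivAt (fun s : ℝ => f (xk + s • d)) (fderiv ℝ f (xk + t • d) d) t := by
  have hc : HasDerivAt (fun s : ℝ => xk + s • d) d t := by
    simpa using ((hasDerivAt_id t).smul_const d).const_add xk
  exact ((hf.differentiable (by norm_num)).differentiableAt.hasFDerivAt).comp_hasDerivAt t hc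

lemma aux_line_deriv2 (f : E → ℝ) (hf : ContDiff ℝ 3 f) (xk d : E) (t : ℝ) :
    deriv (deriv (fun s : ℝ => f (xk + s • d))) t =
      iteratedFDeriv ℝ 2 f (xk + t • d) ![d, d] := by
  have hderiv : deriv (fun s : ℝ => f (xk + s • d))
      = fun s => fderiv ℝ f (xk + s • d) d :=
    funext fun s => (aux_line_deriv f hf xk d s).deriv
  have hc : HasDerivAt (fun s : ℝ => xk + s • d) d t := by
    simpa using ((hasDerivAt_id t).smul_const d).const_add xk
  have hF1 : ContDiff ℝ 2 (fderiv ℝ f) := hf.fderiv_right (by norm_num)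
  have h1 : HasDerivAt (fun s : ℝ => fderiv ℝ f (xk + s • d))
      (fderiv ℝ (fderiv ℝ f) (xk + t • d) d) t :=
    ((hF1.differentiable (by norm_num)).differentiableAt.hasFDerivAt).comp_hasDerivAt t hc
  have h2 : HasDerivAt (fun s : ℝ => fderiv ℝ f (xk + s • d) d)
      (fderiv ℝ (fderiv ℝ f) (xk + t • d) d d) t := by
    simpa using h1.clm_apply (hasDerivAt_const t d)
  rw [hderiv, h2.deriv, iteratedFDeriv_two_apply]
  simp

lemma aux_line_convex (f : E → ℝ) (hconv : ConvexOn ℝ Set.univ f) (xk d : E) :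
    ConvexOn ℝ Set.univ (fun s : ℝ => f (xk + s • d)) := by
  have h := hconv.comp_affineMap (AffineMap.lineMap xk (xk + d) : ℝ →ᵃ[ℝ] E)
  have he : (f ∘ (AffineMap.lineMap xk (xk + d) : ℝ →ᵃ[ℝ] E))
      = fun s : ℝ => f (xk + s • d) := by
    funext t
    simp [AffineMap.lineMap_apply, add_sub_cancel_left, add_comm]
  rw [he] at h
  simpa using h

lemma aux_hessQ_smul (f : E → ℝ) (x u : E) (a : ℝ) :
    hessQ f x (a • u) = a ^ 2 * hessQ f x u := by
  simp only [hessQ, iteratedFDeriv_two_apply, Matrix.cons_val_zero, Matrix.cons_val_one,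
    Matrix.head_cons, map_smul, ContinuousLinearMap.smul_apply, smul_eq_mul]
  ring

lemma aux_hessQ_zero (f : E → ℝ) (x : E) : hessQ f x 0 = 0 := by
  simp only [hessQ, iteratedFDeriv_two_apply, Matrix.cons_val_zero, Matrix.cons_val_one,
    Matrix.head_cons, map_zero, ContinuousLinearMap.zero_apply]

lemma aux_inner_gradient (f : E → ℝ) (x u : E) :
    ⟪gradient f x, u⟫ = fderiv ℝ f x u := by
  simp only [gradient]
  rw [← InnerProductSpace.toDual_apply_apply, LinearIsometryEquiv.apply_symm_apply]

end AuxMain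


/-- Descent lemma for the damped proximal-Newton step (`D = ∇²f(xᵏ)`, so `β = λ`):
the step size `α = (1/r)ln(1 + r)` lies in `(0,1]` and
`F(xᵏ + α d) ≤ F(xᵏ) - (λ²/r)[(1 + 1/r) ln(1 + r) - 1]`. -/
theorem prox_newton_descent_lemma {E : Type*}
    [NormedAddCommGroup E] [InnerProductSpace ℝ E] [CompleteSpace E]
    (M : ℝ) (hM : 0 < M) (f : E → ℝ) (hf : SCLike M f)
    (g : E → EReal)
    (hg_proper_top : ∃ x, g x ≠ ⊤) (hg_proper_bot : ∀ x, g x ≠ ⊥)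
    (hg_lsc : LowerSemicontinuous g)
    (hg_convex : ∀ x y : E, ∀ a b : ℝ, 0 ≤ a → 0 ≤ b → a + b = 1 →
      g (a • x + b • y) ≤ (a : EReal) * g x + (b : EReal) * g y)
    (xk : E) (hxk : g xk ≠ ⊤)
    (s : E)
    (hs : ∀ x : E,
      ((f xk + ⟪gradient f xk, s - xk⟫ + (1 / 2) * hessQ f xk (s - xk) : ℝ) : EReal)
          + g s ≤
        ((f xk + ⟪gradient f xk, x - xk⟫ + (1 / 2) * hessQ f xk (x - xk) : ℝ) : EReal)
          + g x)
    (d : E) (hd : d = s - xk) (hd0 : d ≠ 0)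
    (lam r α : ℝ)
    (hlam : lam = Real.sqrt (hessQ f xk d))
    (hr : r = M * ‖d‖)
    (hα : α = (1 / r) * Real.log (1 + r)) :
    0 < α ∧ α ≤ 1 ∧
      (f (xk + α • d) : EReal) + g (xk + α • d) ≤
        ((f xk : EReal) + g xk) -
          ((lam ^ 2 / r) * ((1 + 1 / r) * Real.log (1 + r) - 1) : ℝ) := by
  have hnd : 0 < ‖d‖ := norm_pos_iff.mpr hd0
  have hrpos : 0 < r := hr ▸ mul_pos hM hnd
  have hr1 : (0:ℝ) < 1 + r := by linarith
  have hLpos : 0 < Real.log (1 + r) := Real.log_pos (by linarith)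
  have hαpos : 0 < α := by rw [hα]; positivity
  have hlog_le : Real.log (1 + r) ≤ r := by
    have := Real.add_one_le_exp r
    rw [Real.log_le_iff_le_exp hr1]; linarith
  have hα1 : α ≤ 1 := by
    rw [hα]
    calc (1/r) * Real.log (1+r) ≤ (1/r) * r :=
          mul_le_mul_of_nonneg_left hlog_le (by positivity)
      _ = 1 := by field_simp
  -- the line function
  set φ : ℝ → ℝ := fun t : ℝ => f (xk + t • d) with hφdef
  have hφC : ContDiff ℝ 3 φ := aux_line_contDiff f hf.1 xk d
  have hφconv : ConvexOn ℝ Set.univ φ := aux_line_convex f hf.2.1 xk d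
  have h3' : ∀ t, |deriv^[3] φ t| ≤ (M * ‖d‖) * deriv^[2] φ t := by
    intro t
    calc |deriv^[3] φ t| ≤ M * deriv^[2] φ t * ‖d‖ := hf.2.2 xk d t
      _ = (M * ‖d‖) * deriv^[2] φ t := by ring
  have hψ0 : deriv (deriv φ) 0 = hessQ f xk d := by
    rw [hφdef, aux_line_deriv2 f hf.1 xk d 0]
    simp [hessQ]
  have hQnn : 0 ≤ hessQ f xk d := hψ0 ▸ aux_second_deriv_nonneg hφC hφconv 0
  have hlam2 : lam ^ 2 = hessQ f xk d := by rw [hlam]; exact Real.sq_sqrt hQnn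
  have hφ'0 : deriv φ 0 = ⟪gradient f xk, d⟫ := by
    rw [hφdef, (aux_line_deriv f hf.1 xk d 0).deriv, aux_inner_gradient]
    simp
  have hφ0 : φ 0 = f xk := by simp [hφdef]
  -- EReal bookkeeping
  set Gk : ℝ := (g xk).toReal with hGkdef
  have hGk : g xk = (Gk : EReal) := (EReal.coe_toReal hxk (hg_proper_bot xk)).symm
  have hsd : s - xk = d := hd.symm
  have hgs_ne_top : g s ≠ ⊤ := by
    intro htop
    have h0 := hs xk
    rw [htop, hsd] at h0
    simp only [sub_self, aux_hessQ_zero, inner_zero_right, mul_zero, add_zero] at h0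
    rw [EReal.add_top_of_ne_bot (EReal.coe_ne_bot _)] at h0
    have := top_le_iff.mp h0
    exact absurd this (EReal.add_lt_top (EReal.coe_ne_top _) hxk).ne
  set Gs : ℝ := (g s).toReal with hGsdef
  have hGs : g s = (Gs : EReal) := (EReal.coe_toReal hgs_ne_top (hg_proper_bot s)).symm
  set Q : ℝ := hessQ f xk d with hQdef
  set I : ℝ := ⟪gradient f xk, d⟫ with hIdef
  -- key model inequality for each a ∈ (0,1)
  have key : ∀ a : ℝ, 0 < a → a < 1 → I + Gs - Gk ≤ -((1 + a) / 2 * Q) := by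
    intro a ha0 ha1
    have hx := hs (xk + a • d)
    rw [hsd, add_sub_cancel_left, real_inner_smul_right, aux_hessQ_smul, hGs] at hx
    have hcomb : xk + a • d = (1 - a) • xk + a • s := by
      rw [hd]; module
    have hgc := hg_convex xk s (1 - a) a (by linarith) ha0.le (by ring)
    rw [← hcomb, hGk, hGs] at hgc
    have hgc' : g (xk + a • d) ≤ (((1 - a) * Gk + a * Gs : ℝ) : EReal) := by
      rw [EReal.coe_add, EReal.coe_mul, EReal.coe_mul] at *
      exact hgc
    have h2 := le_trans hx (add_le_add_right hgc' _)
    rw [← EReal.coe_add, ← EReal.coe_add, EReal.coe_le_coe_iff] at h2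
    nlinarith [h2, sub_pos.mpr ha1]
  -- pass to the limit a → 1⁻
  have hT : I + Gs - Gk ≤ -Q := by
    have hcont : Continuous (fun a : ℝ => -((1 + a) / 2 * Q)) := by fun_prop
    have htend : Filter.Tendsto (fun a : ℝ => -((1 + a) / 2 * Q)) (nhdsWithin 1 (Set.Iio 1))
        (nhds (-Q)) := by
      have h2 : Filter.Tendsto (fun a : ℝ => -((1 + a) / 2 * Q))
          (nhdsWithin 1 (Set.Iio 1)) (nhds (-((1 + 1) / 2 * Q))) :=
        (hcont.tendsto 1).mono_left nhdsWithin_le_nhds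
      convert h2 using 2
      norm_num
    refine ge_of_tendsto htend ?_
    filter_upwards [Ioo_mem_nhdsLT_of_mem (show (1:ℝ) ∈ Set.Ioc 0 1 by norm_num)] with a ha
    exact key a ha.1 ha.2
  -- one-dimensional bound at α
  have hrr : M * ‖d‖ = r := hr.symm
  have hbound := aux_oneDim_bound hφC hφconv (hrr ▸ hrpos) (by rw [hrr]; exact hrr ▸ h3') hαpos.le
  rw [hrr] at hbound
  have hrα : r * α = Real.log (1 + r) := by rw [hα]; field_simp
  have hexp : Real.exp (r * α) = 1 + r := by rw [hrα, Real.exp_log hr1]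
  have hfb : f (xk + α • d) ≤ f xk + α * I + (Q / r ^ 2) * (r - Real.log (1 + r)) := by
    have h := hbound
    rw [hψ0, hφ'0, hφ0, hexp, hrα] at h
    calc f (xk + α • d) = φ α := rfl
      _ ≤ f xk + α * I + (Q / r ^ 2) * (1 + r - Real.log (1+r) - 1) := h
      _ = f xk + α * I + (Q / r ^ 2) * (r - Real.log (1+r)) := by ring_nf
  -- convexity of g at α
  have hcombα : xk + α • d = (1 - α) • xk + α • s := by rw [hd]; module
  have hgα : g (xk + α • d) ≤ (((1 - α) * Gk + α * Gs : ℝ) : EReal) := by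
    have := hg_convex xk s (1 - α) α (by linarith) hαpos.le (by ring)
    rw [← hcombα, hGk, hGs] at this
    rw [EReal.coe_add, EReal.coe_mul, EReal.coe_mul] at *
    exact this
  refine ⟨hαpos, hα1, ?_⟩
  have hkey : -α * Q + (Q / r ^ 2) * (r - Real.log (1 + r))
      = -((Q / r) * ((1 + 1 / r) * Real.log (1 + r) - 1)) := by
    rw [hα]; field_simp; ring
  have hmul : α * (I + Gs - Gk) ≤ α * (-Q) := mul_le_mul_of_nonneg_left hT hαpos.le
  have hreal : f (xk + α • d) + ((1 - α) * Gk + α * Gs)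
      ≤ f xk + Gk - (lam ^ 2 / r) * ((1 + 1/r) * Real.log (1 + r) - 1) := by
    rw [hlam2]
    nlinarith [hfb, hmul, hkey]
  calc (f (xk + α • d) : EReal) + g (xk + α • d)
      ≤ (f (xk + α • d) : EReal) + (((1 - α) * Gk + α * Gs : ℝ) : EReal) :=
        add_le_add_right hgα _
    _ = ((f (xk + α • d) + ((1 - α) * Gk + α * Gs) : ℝ) : EReal) := by norm_cast
    _ ≤ ((f xk + Gk - (lam ^ 2 / r) * ((1 + 1/r) * Real.log (1 + r) - 1) : ℝ) : EReal) := by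
        exact_mod_cast hreal
    _ = ((f xk : EReal) + g xk) -
          ((lam ^ 2 / r) * ((1 + 1 / r) * Real.log (1 + r) - 1) : ℝ) := by
        rw [hGk]; norm_cast
end

section
/- For all r ∈ (0, ln(4/3)], the inequality e^{r}·(e^{r} − r − 1) ≤ 2·r²·(2 − e^{r}) holds. -/
/-! Since `e^r - 1 - r ≤ r²` for `|r| ≤ 1`, the left side is at most `e^r r²`, and
`e^r r² ≤ 2 r² (2 - e^r)` is equivalent to `3 e^r ≤ 4`, i.e. to `r ≤ ln(4/3)`. -/

open Real

theorem exp_mul_exp_sub_sub_one_le {x : ℝ} (hx : |x| ≤ 1) (hexp : exp x ≤ 4 / 3) :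
    exp x * (exp x - x - 1) ≤ 2 * x ^ 2 * (2 - exp x) := by
  have hquad : exp x - x - 1 ≤ x ^ 2 := by
    linarith [(abs_le.1 (abs_exp_sub_one_sub_id_le hx)).2]
  calc exp x * (exp x - x - 1) ≤ exp x * x ^ 2 :=
        mul_le_mul_of_nonneg_left hquad (exp_pos x).le
    _ ≤ 2 * x ^ 2 * (2 - exp x) := by
        nlinarith [mul_nonneg (sq_nonneg x) (by linarith : (0 : ℝ) ≤ 4 - 3 * exp x)]

/-- The key scalar estimate for quadratic convergence of the full-step proximal-Newton
method: for `0 < r ≤ ln(4/3)`, `e^r (e^r - r - 1) ≤ 2 r² (2 - e^r)`. -/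
theorem newton_contraction_ineq (r : ℝ) (hr0 : 0 < r) (hr : r ≤ Real.log (4 / 3)) :
    Real.exp r * (Real.exp r - r - 1) ≤ 2 * r ^ 2 * (2 - Real.exp r) := by
  have hexp : exp r ≤ 4 / 3 := by
    simpa [exp_log] using exp_le_exp.2 hr
  have hr1 : |r| ≤ 1 := by
    have hlog := log_le_sub_one_of_pos (show (0 : ℝ) < 4 / 3 by norm_num)
    rw [abs_le]
    constructor <;> linarith
  exact exp_mul_exp_sub_sub_one_le hr1 hexp
end

section
/- For every m ≥ 1, every a ∈ ℝᵐ, every μ ∈ ℝᵐ, the function ψ(t) := log(Σᵢ e^{aᵢt + μᵢ}) satisfies |ψ'''(t)| ≤ √6·‖a‖₂·ψ''(t) for all t ∈ ℝ. -/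
/-! With the Gibbs weights `w i = exp (a i * s + μ i)` and the weighted mean
`c = ∑ a i w i / ∑ w i`, one has `ψ'' = ∑ (a i - c)² w i / ∑ w i` and
`ψ''' = ∑ (a i - c)³ w i / ∑ w i`: they are the second and third central moments of `a`.
Every deviation satisfies `|a i - c| ≤ 2 ‖a‖₂ ≤ √6 ‖a‖₂`, so the third central moment is at
most that constant times the second. -/

open Real Finset

section WeightedSums

variable {ι : Type*} (s : Finset ι) (x w : ι → ℝ)

theorem sum_sub_sq_mul (c : ℝ) :
    ∑ i ∈ s, (x i - c) ^ 2 * w i =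
      ∑ i ∈ s, x i ^ 2 * w i - 2 * c * ∑ i ∈ s, x i * w i + c ^ 2 * ∑ i ∈ s, w i := by
  simp only [mul_sum, ← sum_sub_distrib, ← sum_add_distrib]
  exact sum_congr rfl fun i _ => by ring

theorem sum_sub_pow_three_mul (c : ℝ) :
    ∑ i ∈ s, (x i - c) ^ 3 * w i =
      ∑ i ∈ s, x i ^ 3 * w i - 3 * c * ∑ i ∈ s, x i ^ 2 * w i
        + 3 * c ^ 2 * ∑ i ∈ s, x i * w i - c ^ 3 * ∑ i ∈ s, w i := by
  simp only [mul_sum, ← sum_sub_distrib, ← sum_add_distrib]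
  exact sum_congr rfl fun i _ => by ring

variable {s x w}

theorem abs_sum_mul_le_mul_sum {R : ℝ} (hw : ∀ i ∈ s, 0 ≤ w i) (hx : ∀ i ∈ s, |x i| ≤ R) :
    |∑ i ∈ s, x i * w i| ≤ R * ∑ i ∈ s, w i := by
  rw [mul_sum]
  refine (abs_sum_le_sum_abs _ _).trans (sum_le_sum fun i hi => ?_)
  rw [abs_mul, abs_of_nonneg (hw i hi)]
  exact mul_le_mul_of_nonneg_right (hx i hi) (hw i hi)

theorem abs_sub_pow_three_mul_le {c C : ℝ} (hw : ∀ i ∈ s, 0 ≤ w i)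
    (hC : ∀ i ∈ s, |x i - c| ≤ C) :
    |∑ i ∈ s, (x i - c) ^ 3 * w i| ≤ C * ∑ i ∈ s, (x i - c) ^ 2 * w i := by
  have h := abs_sum_mul_le_mul_sum (s := s) (x := fun i => x i - c)
    (w := fun i => (x i - c) ^ 2 * w i) (fun i hi => mul_nonneg (sq_nonneg _) (hw i hi)) hC
  simpa only [← mul_assoc, ← pow_succ'] using h

theorem abs_sub_weighted_mean_le {R : ℝ} (hw : ∀ i ∈ s, 0 ≤ w i) (hW : 0 < ∑ i ∈ s, w i)
    (hx : ∀ i ∈ s, |x i| ≤ R) {j : ι} (hj : j ∈ s) :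
    |x j - (∑ i ∈ s, x i * w i) / ∑ i ∈ s, w i| ≤ 2 * R := by
  have hmean : |(∑ i ∈ s, x i * w i) / ∑ i ∈ s, w i| ≤ R := by
    rw [abs_div, abs_of_pos hW, div_le_iff₀ hW]
    exact abs_sum_mul_le_mul_sum hw hx
  linarith [abs_sub (x j) ((∑ i ∈ s, x i * w i) / ∑ i ∈ s, w i), hx j hj]

end WeightedSums

noncomputable section LogSumExp

variable {ι : Type*} [Fintype ι] (a μ : ι → ℝ)

def logSumExpLine (s : ℝ) : ℝ := log (∑ i, exp (a i * s + μ i))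

def expMoment (k : ℕ) (s : ℝ) : ℝ := ∑ i, a i ^ k * exp (a i * s + μ i)

theorem expMoment_zero (s : ℝ) : expMoment a μ 0 s = ∑ i, exp (a i * s + μ i) := by
  simp only [expMoment, pow_zero, one_mul]

theorem expMoment_one (s : ℝ) : expMoment a μ 1 s = ∑ i, a i * exp (a i * s + μ i) := by
  simp only [expMoment, pow_one]

theorem hasDerivAt_expMoment (k : ℕ) (s : ℝ) :
    HasDerivAt (expMoment a μ k) (expMoment a μ (k + 1) s) s := by
  refine HasDerivAt.fun_sum fun i _ => ?_
  have h := ((((hasDerivAt_id' s).const_mul (a i)).add_const (μ i)).exp).const_mul (a i ^ k)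
  exact h.congr_deriv (by ring)

variable [Nonempty ι]

theorem expMoment_zero_pos (s : ℝ) : 0 < expMoment a μ 0 s :=
  sum_pos (fun i _ => by positivity) univ_nonempty

theorem deriv_logSumExpLine :
    deriv (logSumExpLine a μ) = fun s => expMoment a μ 1 s / expMoment a μ 0 s := by
  have h : logSumExpLine a μ = fun s => log (expMoment a μ 0 s) := by
    simp only [expMoment_zero]
    rfl
  funext s
  rw [h, ((hasDerivAt_expMoment a μ 0 s).log (expMoment_zero_pos a μ s).ne').deriv]

theorem iterate_deriv_two_logSumExpLine :
    deriv^[2] (logSumExpLine a μ) = fun s =>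
      (expMoment a μ 2 s * expMoment a μ 0 s - expMoment a μ 1 s * expMoment a μ 1 s) /
        expMoment a μ 0 s ^ 2 := by
  rw [Function.iterate_succ_apply', Function.iterate_one, deriv_logSumExpLine]
  funext s
  exact ((hasDerivAt_expMoment a μ 1 s).div (hasDerivAt_expMoment a μ 0 s)
    (expMoment_zero_pos a μ s).ne').deriv

theorem iterate_deriv_three_logSumExpLine (s : ℝ) :
    deriv^[3] (logSumExpLine a μ) s =
      (expMoment a μ 3 s * expMoment a μ 0 s ^ 2
        - 3 * expMoment a μ 2 s * expMoment a μ 1 s * expMoment a μ 0 s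
        + 2 * expMoment a μ 1 s ^ 3) / expMoment a μ 0 s ^ 3 := by
  rw [Function.iterate_succ_apply', iterate_deriv_two_logSumExpLine]
  have hM := hasDerivAt_expMoment a μ
  have hpos := expMoment_zero_pos a μ s
  have h := (((hM 2 s).fun_mul (hM 0 s)).fun_sub ((hM 1 s).fun_mul (hM 1 s))).fun_div
    ((hM 0 s).fun_pow 2) (by positivity)
  rw [h.deriv]
  field_simp
  ring

theorem iterate_deriv_two_logSumExpLine_eq_sum_sq (s : ℝ) :
    deriv^[2] (logSumExpLine a μ) s =
      (∑ i, (a i - expMoment a μ 1 s / expMoment a μ 0 s) ^ 2 * exp (a i * s + μ i)) /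
        expMoment a μ 0 s := by
  have hpos := expMoment_zero_pos a μ s
  rw [iterate_deriv_two_logSumExpLine, sum_sub_sq_mul, ← expMoment_zero, ← expMoment_one]
  simp only [← expMoment.eq_1]
  field_simp
  ring

theorem iterate_deriv_three_logSumExpLine_eq_sum_cube (s : ℝ) :
    deriv^[3] (logSumExpLine a μ) s =
      (∑ i, (a i - expMoment a μ 1 s / expMoment a μ 0 s) ^ 3 * exp (a i * s + μ i)) /
        expMoment a μ 0 s := by
  have hpos := expMoment_zero_pos a μ s
  rw [iterate_deriv_three_logSumExpLine, sum_sub_pow_three_mul, ← expMoment_zero,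
    ← expMoment_one]
  simp only [← expMoment.eq_1]
  field_simp
  ring

theorem abs_sub_expMoment_div_le (s : ℝ) (j : ι) :
    |a j - expMoment a μ 1 s / expMoment a μ 0 s| ≤ 2 * √(∑ i, a i ^ 2) := by
  have hpos := expMoment_zero_pos a μ s
  rw [expMoment_zero] at hpos
  rw [expMoment_zero, expMoment_one]
  refine abs_sub_weighted_mean_le (fun i _ => (exp_pos _).le) hpos (fun i _ => ?_) (mem_univ j)
  exact abs_le_sqrt (single_le_sum (fun k _ => sq_nonneg (a k)) (mem_univ i))

end LogSumExp

/-- The log-sum-exp function along a line, `ψ(t) = log ∑ᵢ e^{aᵢ t + μᵢ}`, satisfies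
`|ψ'''(t)| ≤ √6 ‖a‖₂ ψ''(t)` for all `t`. -/
theorem logSumExp_third_deriv_bound (m : ℕ) (hm : 1 ≤ m) (a μ : Fin m → ℝ) (t : ℝ) :
    |deriv^[3] (fun s : ℝ => Real.log (∑ i, Real.exp (a i * s + μ i))) t| ≤
      Real.sqrt 6 * Real.sqrt (∑ i, a i ^ 2) *
        deriv^[2] (fun s : ℝ => Real.log (∑ i, Real.exp (a i * s + μ i))) t := by
  have : Nonempty (Fin m) := ⟨⟨0, hm⟩⟩
  have hpos := expMoment_zero_pos a μ t
  have two_le_sqrt_six : (2 : ℝ) ≤ √6 := le_sqrt_of_sq_le (by norm_num)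
  change |deriv^[3] (logSumExpLine a μ) t| ≤
    √6 * √(∑ i, a i ^ 2) * deriv^[2] (logSumExpLine a μ) t
  rw [iterate_deriv_three_logSumExpLine_eq_sum_cube, iterate_deriv_two_logSumExpLine_eq_sum_sq,
    abs_div, abs_of_pos hpos, mul_div_assoc']
  gcongr
  refine abs_sub_pow_three_mul_le (fun i _ => (exp_pos _).le) fun i _ => ?_
  exact (abs_sub_expMoment_div_le a μ t i).trans (by gcongr)
end

section
/- Let a₁, …, aₘ ∈ ℝⁿ, b₁, …, bₘ ∈ ℝ, and c ∈ ℝⁿ. The function f(x) := Σᵢ₌₁ᵐ e^{⟨aᵢ, x⟩ + bᵢ} + ⟨c, x⟩ is convex and M_f-self-concordant-like with M_f := max{‖aᵢ‖₂ : 1 ≤ i ≤ m}; that is, for every x, u ∈ ℝⁿ, φ(t) := f(x + tu) satisfies |φ'''(t)| ≤ M_f·‖u‖₂·φ''(t) for all t. -/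
open scoped RealInnerProductSpace

lemma hasDeriv_gsum {m : ℕ} (p α β : Fin m → ℝ) (s : ℝ) :
    HasDerivAt (fun s : ℝ => ∑ i, p i * Real.exp (α i * s + β i))
      (∑ i, (p i * α i) * Real.exp (α i * s + β i)) s := by
  apply HasDerivAt.fun_sum
  intro i _
  have h : HasDerivAt (fun s : ℝ => α i * s + β i) (α i) s := by
    simpa using ((hasDerivAt_id s).const_mul (α i)).add_const (β i)
  have := (h.exp).const_mul (p i)
  convert this using 1
  rfl
  ring

lemma deriv_phi' {m : ℕ} (p α β : Fin m → ℝ) (k₀ k₁ : ℝ) :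
    deriv (fun s : ℝ => (∑ i, p i * Real.exp (α i * s + β i)) + (k₀ + s * k₁))
      = fun s => (∑ i, (p i * α i) * Real.exp (α i * s + β i)) + k₁ := by
  funext s
  have h2 : HasDerivAt (fun s : ℝ => k₀ + s * k₁) k₁ s := by
    simpa using (hasDerivAt_const s k₀).fun_add ((hasDerivAt_id s).mul_const k₁)
  exact ((hasDeriv_gsum p α β s).add h2).deriv

/-- The exponential-sum function from geometric programming,
`f(x) = ∑ᵢ e^{⟨aᵢ,x⟩ + bᵢ} + ⟨c,x⟩`, is convex and `M_f`-self-concordant-like with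
`M_f = max_i ‖aᵢ‖₂`. -/
theorem expSum_convex_sclike {E : Type*} [NormedAddCommGroup E] [InnerProductSpace ℝ E]
    (m : ℕ) (hm : 0 < m) (a : Fin m → E) (b : Fin m → ℝ) (c : E) :
    ConvexOn ℝ Set.univ
        (fun x : E => (∑ i, Real.exp (⟪a i, x⟫ + b i)) + ⟪c, x⟫) ∧
      ∀ x u : E, ∀ t : ℝ,
        |deriv^[3]
            (fun s : ℝ => (∑ i, Real.exp (⟪a i, x + s • u⟫ + b i)) + ⟪c, x + s • u⟫) t| ≤
          (Finset.univ.sup'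
              (Finset.univ_nonempty_iff.mpr (Fin.pos_iff_nonempty.mp hm))
              fun i => ‖a i‖) *
            deriv^[2]
              (fun s : ℝ => (∑ i, Real.exp (⟪a i, x + s • u⟫ + b i)) + ⟪c, x + s • u⟫) t *
            ‖u‖ := by
  constructor
  · refine ⟨convex_univ, ?_⟩
    intro x _ y _ p q hp hq hpq
    have key : ∀ i : Fin m, Real.exp (⟪a i, p • x + q • y⟫ + b i)
        ≤ p * Real.exp (⟪a i, x⟫ + b i) + q * Real.exp (⟪a i, y⟫ + b i) := by
      intro i
      have h1 : ⟪a i, p • x + q • y⟫ + b i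
          = p * (⟪a i, x⟫ + b i) + q * (⟪a i, y⟫ + b i) := by
        rw [inner_add_right, real_inner_smul_right, real_inner_smul_right]
        linear_combination (-(b i)) * hpq
      rw [h1]
      have := convexOn_exp.2 (Set.mem_univ (⟪a i, x⟫ + b i))
        (Set.mem_univ (⟪a i, y⟫ + b i)) hp hq hpq
      simpa [smul_eq_mul] using this
    have hlin : ⟪c, p • x + q • y⟫ = p * ⟪c, x⟫ + q * ⟪c, y⟫ := by
      rw [inner_add_right, real_inner_smul_right, real_inner_smul_right]
    simp only [smul_eq_mul]
    calc (∑ i, Real.exp (⟪a i, p • x + q • y⟫ + b i)) + ⟪c, p • x + q • y⟫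
        ≤ (∑ i, (p * Real.exp (⟪a i, x⟫ + b i) + q * Real.exp (⟪a i, y⟫ + b i)))
            + (p * ⟪c, x⟫ + q * ⟪c, y⟫) := by
          rw [hlin]
          gcongr
          exact key _
      _ = p * ((∑ i, Real.exp (⟪a i, x⟫ + b i)) + ⟪c, x⟫)
            + q * ((∑ i, Real.exp (⟪a i, y⟫ + b i)) + ⟪c, y⟫) := by
          rw [Finset.sum_add_distrib, mul_add, mul_add, Finset.mul_sum, Finset.mul_sum]
          ring
  · intro x u t
    set α : Fin m → ℝ := fun i => ⟪a i, u⟫ with hα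
    set β : Fin m → ℝ := fun i => ⟪a i, x⟫ + b i with hβ
    have hrw : (fun s : ℝ => (∑ i, Real.exp (⟪a i, x + s • u⟫ + b i)) + ⟪c, x + s • u⟫)
        = fun s : ℝ => (∑ i, (1:ℝ) * Real.exp (α i * s + β i)) + (⟪c, x⟫ + s * ⟪c, u⟫) := by
      funext s
      congr 1
      · apply Finset.sum_congr rfl
        intro i _
        rw [one_mul]
        congr 1
        rw [inner_add_right, real_inner_smul_right, hα, hβ]
        ring
      · rw [inner_add_right, real_inner_smul_right]
    rw [hrw]
    have e1 : (fun s : ℝ => (∑ i, ((1:ℝ) * α i) * Real.exp (α i * s + β i)) + ⟪c, u⟫)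
        = fun s : ℝ => (∑ i, α i * Real.exp (α i * s + β i)) + (⟪c, u⟫ + s * 0) := by
      funext s; simp
    have e2 : (fun s : ℝ => (∑ i, (α i * α i) * Real.exp (α i * s + β i)) + (0:ℝ))
        = fun s : ℝ => (∑ i, (α i * α i) * Real.exp (α i * s + β i)) + ((0:ℝ) + s * 0) := by
      funext s; simp
    have hd2 : deriv^[2]
        (fun s : ℝ => (∑ i, (1:ℝ) * Real.exp (α i * s + β i)) + (⟪c, x⟫ + s * ⟪c, u⟫))
        = fun s => (∑ i, (α i * α i) * Real.exp (α i * s + β i)) + (0:ℝ) := by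
      show deriv (deriv _) = _
      rw [deriv_phi', e1, deriv_phi']
    have hd3 : deriv^[3]
        (fun s : ℝ => (∑ i, (1:ℝ) * Real.exp (α i * s + β i)) + (⟪c, x⟫ + s * ⟪c, u⟫))
        = fun s => ∑ i, ((α i * α i) * α i) * Real.exp (α i * s + β i) := by
      show deriv (deriv^[2] _) = _
      rw [hd2, e2, deriv_phi']
      funext s
      simp
    rw [hd2, hd3]
    set M := Finset.univ.sup'
      (Finset.univ_nonempty_iff.mpr (Fin.pos_iff_nonempty.mp hm)) (fun i => ‖a i‖) with hM
    have hsup : ∀ i : Fin m, ‖a i‖ ≤ M := fun i =>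
      Finset.le_sup' (fun i => ‖a i‖) (Finset.mem_univ i)
    have hMnn : 0 ≤ M := by
      obtain ⟨i⟩ := Fin.pos_iff_nonempty.mp hm
      exact le_trans (norm_nonneg (a i)) (hsup i)
    have hbound : ∀ i : Fin m, |α i| ≤ M * ‖u‖ := by
      intro i
      calc |α i| ≤ ‖a i‖ * ‖u‖ := abs_real_inner_le_norm _ _
        _ ≤ M * ‖u‖ := by gcongr; exact hsup i
    simp only [add_zero]
    calc |∑ i, ((α i * α i) * α i) * Real.exp (α i * t + β i)|
        ≤ ∑ i, |((α i * α i) * α i) * Real.exp (α i * t + β i)| :=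
          Finset.abs_sum_le_sum_abs _ _
      _ ≤ ∑ i, (M * ‖u‖) * ((α i * α i) * Real.exp (α i * t + β i)) := by
          apply Finset.sum_le_sum
          intro i _
          have h2 : (0:ℝ) ≤ (α i * α i) * Real.exp (α i * t + β i) :=
            mul_nonneg (mul_self_nonneg _) (Real.exp_pos _).le
          have habs : |((α i * α i) * α i) * Real.exp (α i * t + β i)|
              = |α i| * ((α i * α i) * Real.exp (α i * t + β i)) := by
            rw [abs_mul, abs_of_nonneg (Real.exp_pos _).le, abs_mul,
              abs_mul_self (α i)]
            ring
          rw [habs]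
          exact mul_le_mul_of_nonneg_right (hbound i) h2
      _ = M * (∑ i, (α i * α i) * Real.exp (α i * t + β i)) * ‖u‖ := by
          rw [← Finset.mul_sum]; ring
end
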